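/- arXiv:2008.13494 — 2 statements merged into one kernel-verified Lean document; each statement's English description precedes it below -/
import Mathlib

section
/- Let X be a coalgebra and ◁ : X⊗X → X a coalgebra map. Define s : X⊗X → X⊗X by s(x⊗y) := y_(2) ⊗ (x ◁ y_(1)). Then s is a left non-degenerate set-theoretic type solution of the braid equation if and only if (X, ◁) is a rack coalgebra, i.e., (1) the map x⊗y ↦ (x◁y_(1)) ⊗ y_(2) is invertible, (2) y_(2) ⊗ (x◁y_(1)) = y_(1) ⊗ (x◁y_(2)) for all x,y, and (3) (x◁y)◁z = (x◁z_(2))◁(y◁z_(1)) for all x,y,z. -/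
open TensorProduct

noncomputable section

variable (k : Type) [Field k] (X : Type) [AddCommGroup X] [Module k X] [Coalgebra k X]

/-- x ⊗ y ↦ ε(y) x -/
def cE : X ⊗[k] X →ₗ[k] X :=
  (TensorProduct.rid k X).toLinearMap ∘ₗ LinearMap.lTensor X (Coalgebra.counit (R := k))

/-- x ⊗ y ↦ ε(x) y -/
def cE' : X ⊗[k] X →ₗ[k] X :=
  (TensorProduct.lid k X).toLinearMap ∘ₗ LinearMap.rTensor X (Coalgebra.counit (R := k))

/-- first Sweedler component of a morphism `X⊗X → X⊗X` -/
def comp1 (s : X ⊗[k] X →ₗ[k] X ⊗[k] X) : X ⊗[k] X →ₗ[k] X := cE k X ∘ₗ s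

/-- second Sweedler component of a morphism `X⊗X → X⊗X` -/
def comp2 (s : X ⊗[k] X →ₗ[k] X ⊗[k] X) : X ⊗[k] X →ₗ[k] X := cE' k X ∘ₗ s

/-- `Gmap f (x ⊗ y) = f (x ⊗ y₍₁₎) ⊗ y₍₂₎` -/
def Gmap (f : X ⊗[k] X →ₗ[k] X) : X ⊗[k] X →ₗ[k] X ⊗[k] X :=
  TensorProduct.map f LinearMap.id ∘ₗ (TensorProduct.assoc k X X X).symm.toLinearMap ∘ₗ
    LinearMap.lTensor X (Coalgebra.comul (R := k))

/-- comultiplication of `X^cop` -/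
def comulCop : X →ₗ[k] X ⊗[k] X :=
  (TensorProduct.comm k X X).toLinearMap ∘ₗ Coalgebra.comul (R := k)

/-- `GmapCop f (x ⊗ y) = f (x ⊗ y₍₂₎) ⊗ y₍₁₎` -/
def GmapCop (f : X ⊗[k] X →ₗ[k] X) : X ⊗[k] X →ₗ[k] X ⊗[k] X :=
  TensorProduct.map f LinearMap.id ∘ₗ (TensorProduct.assoc k X X X).symm.toLinearMap ∘ₗ
    LinearMap.lTensor X (comulCop k X)

/-- comultiplication of `X ⊗ X` -/
def comulT : X ⊗[k] X →ₗ[k] (X ⊗[k] X) ⊗[k] (X ⊗[k] X) :=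
  (TensorProduct.tensorTensorTensorComm k X X X X).toLinearMap ∘ₗ
    TensorProduct.map (Coalgebra.comul (R := k)) (Coalgebra.comul (R := k))

/-- comultiplication of `X ⊗ X^cop` -/
def comulTCop : X ⊗[k] X →ₗ[k] (X ⊗[k] X) ⊗[k] (X ⊗[k] X) :=
  (TensorProduct.tensorTensorTensorComm k X X X X).toLinearMap ∘ₗ
    TensorProduct.map (Coalgebra.comul (R := k)) (comulCop k X)

/-- comultiplication of `X^cop ⊗ X^cop` -/
def comulTcc : X ⊗[k] X →ₗ[k] (X ⊗[k] X) ⊗[k] (X ⊗[k] X) :=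
  (TensorProduct.tensorTensorTensorComm k X X X X).toLinearMap ∘ₗ
    TensorProduct.map (comulCop k X) (comulCop k X)

/-- counit of `X ⊗ X` -/
def counitT : X ⊗[k] X →ₗ[k] k :=
  (TensorProduct.lid k k).toLinearMap ∘ₗ
    TensorProduct.map (Coalgebra.counit (R := k)) (Coalgebra.counit (R := k))

/-- `s : X⊗X → X⊗X` is a coalgebra morphism -/
def IsCoalgEndo (s : X ⊗[k] X →ₗ[k] X ⊗[k] X) : Prop :=
  comulT k X ∘ₗ s = TensorProduct.map s s ∘ₗ comulT k X ∧ counitT k X ∘ₗ s = counitT k X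

/-- `f : X⊗X → X` is a coalgebra morphism -/
def IsCoalgMor (f : X ⊗[k] X →ₗ[k] X) : Prop :=
  Coalgebra.comul (R := k) ∘ₗ f = TensorProduct.map f f ∘ₗ comulT k X ∧
  Coalgebra.counit (R := k) ∘ₗ f = counitT k X

/-- `f : X ⊗ X^cop → X` is a coalgebra morphism -/
def IsCoalgMorCop (f : X ⊗[k] X →ₗ[k] X) : Prop :=
  Coalgebra.comul (R := k) ∘ₗ f = TensorProduct.map f f ∘ₗ comulTCop k X ∧
  Coalgebra.counit (R := k) ∘ₗ f = counitT k X

/-- the operation `x ⊥ y := s₁ ((y·x₍₁₎) ⊗ x₍₂₎)` -/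
def dOf (s : X ⊗[k] X →ₗ[k] X ⊗[k] X) (p : X ⊗[k] X →ₗ[k] X) : X ⊗[k] X →ₗ[k] X :=
  comp1 k X s ∘ₗ Gmap k X p ∘ₗ (TensorProduct.comm k X X).toLinearMap

/-- the operation `⊥` of the endomorphism `s` viewed on `X^cop ⊗ X^cop` -/
def dOfCop (s : X ⊗[k] X →ₗ[k] X ⊗[k] X) (p : X ⊗[k] X →ₗ[k] X) : X ⊗[k] X →ₗ[k] X :=
  comp1 k X s ∘ₗ GmapCop k X p ∘ₗ (TensorProduct.comm k X X).toLinearMap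

/-- left non-degeneracy of `s` : `G_s` is invertible -/
def LeftNonDeg (s : X ⊗[k] X →ₗ[k] X ⊗[k] X) : Prop :=
  Function.Bijective (Gmap k X (comp2 k X s))

/-- `p` is the operation `·` associated with a left non-degenerate `s`, i.e.
`(x·y₍₁₎)^(y₍₂₎) = x^(y₍₁₎)·y₍₂₎ = ε(y)x`. -/
def IsDotOf (s : X ⊗[k] X →ₗ[k] X ⊗[k] X) (p : X ⊗[k] X →ₗ[k] X) : Prop :=
  comp2 k X s ∘ₗ Gmap k X p = cE k X ∧ p ∘ₗ Gmap k X (comp2 k X s) = cE k X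

def s12m (s : X ⊗[k] X →ₗ[k] X ⊗[k] X) : (X ⊗[k] X) ⊗[k] X →ₗ[k] (X ⊗[k] X) ⊗[k] X :=
  LinearMap.rTensor X s

def s23m (s : X ⊗[k] X →ₗ[k] X ⊗[k] X) : (X ⊗[k] X) ⊗[k] X →ₗ[k] (X ⊗[k] X) ⊗[k] X :=
  (TensorProduct.assoc k X X X).symm.toLinearMap ∘ₗ LinearMap.lTensor X s ∘ₗ
    (TensorProduct.assoc k X X X).toLinearMap

/-- the braid equation -/
def IsBraidSol (s : X ⊗[k] X →ₗ[k] X ⊗[k] X) : Prop :=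
  s12m k X s ∘ₗ s23m k X s ∘ₗ s12m k X s = s23m k X s ∘ₗ s12m k X s ∘ₗ s23m k X s

/-- the exchange identity `y₍₁₎⊥x₍₂₎ ⊗ x₍₁₎·y₍₂₎ = y₍₂₎⊥x₍₁₎ ⊗ x₍₂₎·y₍₁₎` -/
def ExchangeId (p d : X ⊗[k] X →ₗ[k] X) : Prop :=
  ∀ (x y : X) (n m : ℕ) (x1 x2 : Fin n → X) (y1 y2 : Fin m → X),
    (∑ i, x1 i ⊗ₜ[k] x2 i) = Coalgebra.comul (R := k) x →
    (∑ j, y1 j ⊗ₜ[k] y2 j) = Coalgebra.comul (R := k) y →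
    (∑ i, ∑ j, d (y1 j ⊗ₜ[k] x2 i) ⊗ₜ[k] p (x1 i ⊗ₜ[k] y2 j)) =
      ∑ i, ∑ j, d (y2 j ⊗ₜ[k] x1 i) ⊗ₜ[k] p (x2 i ⊗ₜ[k] y1 j)

/-- the three q-cycle coalgebra conditions -/
def QCycleConds (p d : X ⊗[k] X →ₗ[k] X) : Prop :=
  ∀ (x y z : X) (n m : ℕ) (y1 y2 : Fin n → X) (z1 z2 : Fin m → X),
    (∑ i, y1 i ⊗ₜ[k] y2 i) = Coalgebra.comul (R := k) y →
    (∑ j, z1 j ⊗ₜ[k] z2 j) = Coalgebra.comul (R := k) z →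
    ((∑ i, p (p (x ⊗ₜ[k] y1 i) ⊗ₜ[k] d (z ⊗ₜ[k] y2 i))) =
        ∑ j, p (p (x ⊗ₜ[k] z2 j) ⊗ₜ[k] p (y ⊗ₜ[k] z1 j)) ∧
     (∑ i, d (p (x ⊗ₜ[k] y1 i) ⊗ₜ[k] p (z ⊗ₜ[k] y2 i))) =
        ∑ j, p (d (x ⊗ₜ[k] z2 j) ⊗ₜ[k] d (y ⊗ₜ[k] z1 j)) ∧
     (∑ i, d (d (x ⊗ₜ[k] y1 i) ⊗ₜ[k] d (z ⊗ₜ[k] y2 i))) =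
        ∑ j, d (d (x ⊗ₜ[k] z2 j) ⊗ₜ[k] p (y ⊗ₜ[k] z1 j)))


/-- the left action `ˣy := y₍₂₎ ⊥ x^(y₍₁₎)`, where `g` is the operation `x^y` -/
def bOf (g d : X ⊗[k] X →ₗ[k] X) : X ⊗[k] X →ₗ[k] X :=
  d ∘ₗ (TensorProduct.comm k X X).toLinearMap ∘ₗ Gmap k X g

/-- the left action `_xy := y₍₁₎ · x_(y₍₂₎)`, where `g'` is the operation `x_y` -/
def uOfCop (g' p : X ⊗[k] X →ₗ[k] X) : X ⊗[k] X →ₗ[k] X :=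
  p ∘ₗ (TensorProduct.comm k X X).toLinearMap ∘ₗ GmapCop k X g'

/-- `Hmap f (x ⊗ y) = f (y₍₂₎ ⊗ x) ⊗ y₍₁₎` -/
def Hmap (f : X ⊗[k] X →ₗ[k] X) : X ⊗[k] X →ₗ[k] X ⊗[k] X :=
  TensorProduct.map f LinearMap.id ∘ₗ (TensorProduct.assoc k X X X).symm.toLinearMap ∘ₗ
    LinearMap.lTensor X (TensorProduct.comm k X X).toLinearMap ∘ₗ
    (TensorProduct.assoc k X X X).toLinearMap ∘ₗ
    LinearMap.rTensor X (comulCop k X) ∘ₗ (TensorProduct.comm k X X).toLinearMap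

/-- `HmapCop f (x ⊗ y) = f (y₍₁₎ ⊗ x) ⊗ y₍₂₎` -/
def HmapCop (f : X ⊗[k] X →ₗ[k] X) : X ⊗[k] X →ₗ[k] X ⊗[k] X :=
  TensorProduct.map f LinearMap.id ∘ₗ (TensorProduct.assoc k X X X).symm.toLinearMap ∘ₗ
    LinearMap.lTensor X (TensorProduct.comm k X X).toLinearMap ∘ₗ
    (TensorProduct.assoc k X X X).toLinearMap ∘ₗ
    LinearMap.rTensor X (Coalgebra.comul (R := k)) ∘ₗ (TensorProduct.comm k X X).toLinearMap

set_option linter.unusedSectionVars false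
section Aux

open Coalgebra LinearMap

variable (tr : X ⊗[k] X →ₗ[k] X)

/-- Every comultiplication has a `Fin`-indexed representation by pure tensors. -/
lemma exists_rep (y : X) : ∃ (n : ℕ) (f g : Fin n → X),
    ∑ i, f i ⊗ₜ[k] g i = Coalgebra.comul (R := k) y := by
  obtain ⟨S, hS⟩ := TensorProduct.exists_finset (Coalgebra.comul (R := k) y)
  refine ⟨S.card, fun i => (S.equivFin.symm i : X × X).1,
    fun i => (S.equivFin.symm i : X × X).2, ?_⟩
  rw [hS, ← Finset.sum_attach S (fun p => p.1 ⊗ₜ[k] p.2)]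
  exact Equiv.sum_comp S.equivFin.symm (fun a : {x // x ∈ S} => (a : X × X).1 ⊗ₜ[k] (a : X × X).2)

@[simp] lemma cE_tmul (x y : X) :
    cE k X (x ⊗ₜ[k] y) = Coalgebra.counit (R := k) y • x := by
  simp [cE]

@[simp] lemma cE'_tmul (x y : X) :
    cE' k X (x ⊗ₜ[k] y) = Coalgebra.counit (R := k) x • y := by
  simp [cE']

@[simp] lemma cE_comul (y : X) : cE k X (Coalgebra.comul (R := k) y) = y := by
  simp [cE]

@[simp] lemma cE'_comul (y : X) : cE' k X (Coalgebra.comul (R := k) y) = y := by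
  simp [cE']

variable {W : Type} [AddCommGroup W] [Module k W]

lemma collapse_r {n : ℕ} {f g : Fin n → X} {y : X}
    (h : ∑ i, f i ⊗ₜ[k] g i = Coalgebra.comul (R := k) y) (T : X →ₗ[k] W) :
    ∑ i, Coalgebra.counit (R := k) (g i) • T (f i) = T y := by
  have h1 : ∑ i, Coalgebra.counit (R := k) (g i) • f i = y := by
    have := congrArg (cE k X) h
    simpa [map_sum] using this
  calc ∑ i, Coalgebra.counit (R := k) (g i) • T (f i)
      = T (∑ i, Coalgebra.counit (R := k) (g i) • f i) := by simp [map_sum]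
    _ = T y := by rw [h1]

lemma collapse_l {n : ℕ} {f g : Fin n → X} {y : X}
    (h : ∑ i, f i ⊗ₜ[k] g i = Coalgebra.comul (R := k) y) (T : X →ₗ[k] W) :
    ∑ i, Coalgebra.counit (R := k) (f i) • T (g i) = T y := by
  have h1 : ∑ i, Coalgebra.counit (R := k) (f i) • g i = y := by
    have := congrArg (cE' k X) h
    simpa [map_sum] using this
  calc ∑ i, Coalgebra.counit (R := k) (f i) • T (g i)
      = T (∑ i, Coalgebra.counit (R := k) (f i) • g i) := by simp [map_sum]
    _ = T y := by rw [h1]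

lemma collapse_eps {n : ℕ} {f g : Fin n → X} {y : X}
    (h : ∑ i, f i ⊗ₜ[k] g i = Coalgebra.comul (R := k) y) :
    ∑ i, Coalgebra.counit (R := k) (f i) * Coalgebra.counit (R := k) (g i)
      = Coalgebra.counit (R := k) y := by
  simpa [smul_eq_mul, mul_comm] using collapse_l (k := k) (X := X) h (Coalgebra.counit (R := k))

lemma Gmap_tmul {n : ℕ} {f g : Fin n → X} {y : X} (F : X ⊗[k] X →ₗ[k] X) (x : X)
    (h : ∑ i, f i ⊗ₜ[k] g i = Coalgebra.comul (R := k) y) :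
    Gmap k X F (x ⊗ₜ[k] y) = ∑ i, F (x ⊗ₜ[k] f i) ⊗ₜ[k] g i := by
  simp only [Gmap, LinearMap.comp_apply, lTensor_tmul, ← h, tmul_sum, map_sum]
  simp

lemma GmapCop_tmul {n : ℕ} {f g : Fin n → X} {y : X} (F : X ⊗[k] X →ₗ[k] X) (x : X)
    (h : ∑ i, f i ⊗ₜ[k] g i = Coalgebra.comul (R := k) y) :
    GmapCop k X F (x ⊗ₜ[k] y) = ∑ i, F (x ⊗ₜ[k] g i) ⊗ₜ[k] f i := by
  have hc : comulCop k X y = ∑ i, g i ⊗ₜ[k] f i := by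
    simp [comulCop, ← h, map_sum]
  simp only [GmapCop, LinearMap.comp_apply, lTensor_tmul, hc, tmul_sum, map_sum]
  simp

lemma s_tmul {n : ℕ} {f g : Fin n → X} {y : X} (x : X)
    (h : ∑ i, f i ⊗ₜ[k] g i = Coalgebra.comul (R := k) y) :
    ((TensorProduct.comm k X X).toLinearMap ∘ₗ Gmap k X tr) (x ⊗ₜ[k] y)
      = ∑ i, g i ⊗ₜ[k] tr (x ⊗ₜ[k] f i) := by
  simp only [LinearMap.comp_apply, LinearEquiv.coe_coe]
  rw [Gmap_tmul k X tr x h]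
  simp [map_sum]

lemma s'_tmul {n : ℕ} {f g : Fin n → X} {y : X} (x : X)
    (h : ∑ i, f i ⊗ₜ[k] g i = Coalgebra.comul (R := k) y) :
    ((TensorProduct.comm k X X).toLinearMap ∘ₗ GmapCop k X tr) (x ⊗ₜ[k] y)
      = ∑ i, f i ⊗ₜ[k] tr (x ⊗ₜ[k] g i) := by
  simp only [LinearMap.comp_apply, LinearEquiv.coe_coe]
  rw [GmapCop_tmul k X tr x h]
  simp [map_sum]

lemma comulT_tmul (u v : X) :
    comulT k X (u ⊗ₜ[k] v) = (TensorProduct.tensorTensorTensorComm k X X X X)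
      (Coalgebra.comul (R := k) u ⊗ₜ[k] Coalgebra.comul (R := k) v) := by
  simp [comulT]

lemma comulT_rep {m n : ℕ} {p q : Fin m → X} {f g : Fin n → X} {u v : X}
    (hu : ∑ i, p i ⊗ₜ[k] q i = Coalgebra.comul (R := k) u)
    (hv : ∑ i, f i ⊗ₜ[k] g i = Coalgebra.comul (R := k) v) :
    comulT k X (u ⊗ₜ[k] v)
      = ∑ i, ∑ j, (p i ⊗ₜ[k] f j) ⊗ₜ[k] (q i ⊗ₜ[k] g j) := by
  rw [comulT_tmul, ← hu, ← hv]
  simp only [sum_tmul, tmul_sum, map_sum, TensorProduct.tensorTensorTensorComm_tmul]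
  rw [Finset.sum_comm]

@[simp] lemma counitT_tmul (u v : X) :
    counitT k X (u ⊗ₜ[k] v)
      = Coalgebra.counit (R := k) u * Coalgebra.counit (R := k) v := by
  simp [counitT, smul_eq_mul]

end Aux

section Aux2

open Coalgebra LinearMap

variable (tr : X ⊗[k] X →ₗ[k] X)

lemma counit_tr (htr : IsCoalgMor k X tr) (u v : X) :
    Coalgebra.counit (R := k) (tr (u ⊗ₜ[k] v))
      = Coalgebra.counit (R := k) u * Coalgebra.counit (R := k) v := by
  have := LinearMap.congr_fun htr.2 (u ⊗ₜ[k] v)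
  simpa using this

lemma comul_tr_rep (htr : IsCoalgMor k X tr) {m n : ℕ} {p q : Fin m → X} {f g : Fin n → X}
    {u v : X}
    (hu : ∑ i, p i ⊗ₜ[k] q i = Coalgebra.comul (R := k) u)
    (hv : ∑ i, f i ⊗ₜ[k] g i = Coalgebra.comul (R := k) v) :
    Coalgebra.comul (R := k) (tr (u ⊗ₜ[k] v))
      = ∑ i, ∑ j, tr (p i ⊗ₜ[k] f j) ⊗ₜ[k] tr (q i ⊗ₜ[k] g j) := by
  have h0 := LinearMap.congr_fun htr.1 (u ⊗ₜ[k] v)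
  simp only [LinearMap.comp_apply] at h0
  rw [h0, comulT_rep k X hu hv]
  simp [map_sum]

/-- `comp2` of the solution is `tr` itself. -/
lemma comp2_s : comp2 k X ((TensorProduct.comm k X X).toLinearMap ∘ₗ Gmap k X tr) = tr := by
  apply TensorProduct.ext'
  intro x y
  obtain ⟨n, f, g, h⟩ := exists_rep k X y
  simp only [comp2, LinearMap.comp_apply]
  rw [← LinearMap.comp_apply ((TensorProduct.comm k X X).toLinearMap) (Gmap k X tr),
    s_tmul k X tr x h]
  rw [map_sum]
  simp only [cE'_tmul]
  exact collapse_r k X h (tr ∘ₗ TensorProduct.mk k X X x)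

/-- the counit part of `IsCoalgEndo` always holds -/
lemma counitT_s (htr : IsCoalgMor k X tr) :
    counitT k X ∘ₗ ((TensorProduct.comm k X X).toLinearMap ∘ₗ Gmap k X tr) = counitT k X := by
  apply TensorProduct.ext'
  intro x y
  obtain ⟨n, f, g, h⟩ := exists_rep k X y
  rw [LinearMap.comp_apply, s_tmul k X tr x h, map_sum]
  simp only [counitT_tmul, counit_tr k X tr htr]
  calc ∑ i, Coalgebra.counit (R := k) (g i)
        * (Coalgebra.counit (R := k) x * Coalgebra.counit (R := k) (f i))
      = Coalgebra.counit (R := k) x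
        * ∑ i, Coalgebra.counit (R := k) (f i) * Coalgebra.counit (R := k) (g i) := by
        rw [Finset.mul_sum]; exact Finset.sum_congr rfl fun i _ => by ring
    _ = Coalgebra.counit (R := k) x * Coalgebra.counit (R := k) y := by
        rw [collapse_eps k X h]

lemma cE_s (htr : IsCoalgMor k X tr) :
    cE k X ∘ₗ ((TensorProduct.comm k X X).toLinearMap ∘ₗ Gmap k X tr) = cE' k X := by
  apply TensorProduct.ext'
  intro x y
  obtain ⟨n, f, g, h⟩ := exists_rep k X y
  rw [LinearMap.comp_apply, s_tmul k X tr x h, map_sum]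
  simp only [cE_tmul, counit_tr k X tr htr, cE'_tmul]
  calc ∑ i, (Coalgebra.counit (R := k) x * Coalgebra.counit (R := k) (f i)) • g i
      = Coalgebra.counit (R := k) x
        • ∑ i, Coalgebra.counit (R := k) (f i) • (LinearMap.id (R := k) (M := X)) (g i) := by
        rw [Finset.smul_sum]; exact Finset.sum_congr rfl fun i _ => by
          simp [mul_smul]
    _ = Coalgebra.counit (R := k) x • y := by rw [collapse_l k X h]; rfl

lemma cEE'_comulT :
    TensorProduct.map (cE k X) (cE' k X) ∘ₗ comulT k X = LinearMap.id := by
  apply TensorProduct.ext'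
  intro x y
  obtain ⟨m, p, q, hx⟩ := exists_rep k X x
  obtain ⟨n, f, g, hy⟩ := exists_rep k X y
  rw [LinearMap.comp_apply, comulT_rep k X hx hy]
  simp only [map_sum, TensorProduct.map_tmul, cE_tmul, cE'_tmul, LinearMap.id_apply]
  have step : ∀ i, ∑ j, (Coalgebra.counit (R := k) (f j) • p i) ⊗ₜ[k]
      (Coalgebra.counit (R := k) (q i) • g j)
      = Coalgebra.counit (R := k) (q i) • (p i ⊗ₜ[k] y) := by
    intro i
    have h2 := collapse_l k X hy
      (Coalgebra.counit (R := k) (q i) • TensorProduct.mk k X X (p i))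
    simp only [LinearMap.smul_apply, TensorProduct.mk_apply] at h2
    calc ∑ j, (Coalgebra.counit (R := k) (f j) • p i) ⊗ₜ[k]
          (Coalgebra.counit (R := k) (q i) • g j)
        = ∑ j, Coalgebra.counit (R := k) (f j)
            • (Coalgebra.counit (R := k) (q i) • (p i ⊗ₜ[k] g j)) :=
          Finset.sum_congr rfl fun j _ => by
            simp only [smul_tmul', tmul_smul]; rw [smul_comm]
      _ = Coalgebra.counit (R := k) (q i) • (p i ⊗ₜ[k] y) := h2
  rw [Finset.sum_congr rfl fun i _ => step i]
  have := collapse_r k X hx ((TensorProduct.mk k X X).flip y)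
  simpa using this

lemma map_cE'_tr_comulT :
    TensorProduct.map (cE' k X) tr ∘ₗ comulT k X
      = (TensorProduct.comm k X X).toLinearMap ∘ₗ GmapCop k X tr := by
  apply TensorProduct.ext'
  intro x y
  obtain ⟨m, p, q, hx⟩ := exists_rep k X x
  obtain ⟨n, f, g, hy⟩ := exists_rep k X y
  rw [LinearMap.comp_apply, comulT_rep k X hx hy, s'_tmul k X tr x hy]
  simp only [map_sum, TensorProduct.map_tmul, cE'_tmul]
  rw [Finset.sum_comm]
  refine Finset.sum_congr rfl fun j _ => ?_
  have := collapse_l k X hx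
    ((TensorProduct.mk k X X (f j)) ∘ₗ tr ∘ₗ ((TensorProduct.mk k X X).flip (g j)))
  simpa [smul_tmul'] using this

/-- `IsCoalgEndo`'s comul part forces condition (2). -/
lemma endo_comul_imp (htr : IsCoalgMor k X tr)
    (h : comulT k X ∘ₗ ((TensorProduct.comm k X X).toLinearMap ∘ₗ Gmap k X tr)
      = TensorProduct.map ((TensorProduct.comm k X X).toLinearMap ∘ₗ Gmap k X tr)
          ((TensorProduct.comm k X X).toLinearMap ∘ₗ Gmap k X tr) ∘ₗ comulT k X) :
    Gmap k X tr = GmapCop k X tr := by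
  set s := (TensorProduct.comm k X X).toLinearMap ∘ₗ Gmap k X tr with hs
  have key : s = (TensorProduct.comm k X X).toLinearMap ∘ₗ GmapCop k X tr := by
    calc s = LinearMap.id ∘ₗ s := by rw [LinearMap.id_comp]
      _ = (TensorProduct.map (cE k X) (cE' k X) ∘ₗ comulT k X) ∘ₗ s := by
          rw [cEE'_comulT]
      _ = TensorProduct.map (cE k X) (cE' k X) ∘ₗ (TensorProduct.map s s ∘ₗ comulT k X) := by
          rw [LinearMap.comp_assoc, h]
      _ = TensorProduct.map (cE k X ∘ₗ s) (cE' k X ∘ₗ s) ∘ₗ comulT k X := by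
          rw [← LinearMap.comp_assoc, ← TensorProduct.map_comp]
      _ = TensorProduct.map (cE' k X) tr ∘ₗ comulT k X := by
          rw [hs, cE_s k X tr htr]
          congr 2
          exact comp2_s k X tr
      _ = (TensorProduct.comm k X X).toLinearMap ∘ₗ GmapCop k X tr := map_cE'_tr_comulT k X tr
  apply LinearMap.ext
  intro u
  have h3 := LinearMap.congr_fun key u
  simp only [hs, LinearMap.comp_apply, LinearEquiv.coe_coe] at h3
  exact (TensorProduct.comm k X X).injective h3

lemma c2_pt (hC2 : Gmap k X tr = GmapCop k X tr) {n : ℕ} {f g : Fin n → X} {y : X}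
    (h : ∑ i, f i ⊗ₜ[k] g i = Coalgebra.comul (R := k) y) (b : X) :
    ∑ i, g i ⊗ₜ[k] tr (b ⊗ₜ[k] f i) = ∑ i, f i ⊗ₜ[k] tr (b ⊗ₜ[k] g i) := by
  rw [← s_tmul k X tr b h, ← s'_tmul k X tr b h, hC2]

lemma c2t_pt (hC2 : Gmap k X tr = GmapCop k X tr) {n : ℕ} {f g : Fin n → X} {y : X}
    (h : ∑ i, f i ⊗ₜ[k] g i = Coalgebra.comul (R := k) y) (a b : X) :
    ∑ i, tr (a ⊗ₜ[k] f i) ⊗ₜ[k] tr (b ⊗ₜ[k] g i)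
      = ∑ i, tr (a ⊗ₜ[k] g i) ⊗ₜ[k] tr (b ⊗ₜ[k] f i) := by
  have := congrArg (TensorProduct.map (tr ∘ₗ TensorProduct.mk k X X a) (LinearMap.id (R := k)))
    (c2_pt k X tr hC2 h b)
  simp only [map_sum, TensorProduct.map_tmul, LinearMap.comp_apply, LinearMap.id_apply,
    TensorProduct.mk_apply] at this
  exact this.symm

lemma comul_tr_cop_rep (htr : IsCoalgMor k X tr) (hC2 : Gmap k X tr = GmapCop k X tr)
    {m n : ℕ} {p q : Fin m → X} {f g : Fin n → X} {u v : X}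
    (hu : ∑ i, p i ⊗ₜ[k] q i = Coalgebra.comul (R := k) u)
    (hv : ∑ i, f i ⊗ₜ[k] g i = Coalgebra.comul (R := k) v) :
    Coalgebra.comul (R := k) (tr (u ⊗ₜ[k] v))
      = ∑ i, ∑ j, tr (p i ⊗ₜ[k] g j) ⊗ₜ[k] tr (q i ⊗ₜ[k] f j) := by
  rw [comul_tr_rep k X tr htr hu hv]
  exact Finset.sum_congr rfl fun i _ => c2t_pt k X tr hC2 hv (p i) (q i)

end Aux2

section Aux3

open Coalgebra LinearMap

/-- three-fold comultiplication -/
def comul3 : X →ₗ[k] X ⊗[k] (X ⊗[k] X) :=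
  LinearMap.lTensor X (Coalgebra.comul (R := k)) ∘ₗ Coalgebra.comul (R := k)

/-- four-fold comultiplication -/
def comul4 : X →ₗ[k] X ⊗[k] (X ⊗[k] (X ⊗[k] X)) :=
  LinearMap.lTensor X (LinearMap.lTensor X (Coalgebra.comul (R := k))) ∘ₗ comul3 k X

lemma comul3_right {n : ℕ} {f g : Fin n → X} {y : X}
    (h : ∑ j, f j ⊗ₜ[k] g j = Coalgebra.comul (R := k) y)
    {nc : Fin n → ℕ} {c d : (j : Fin n) → Fin (nc j) → X}
    (hc : ∀ j, ∑ l, c j l ⊗ₜ[k] d j l = Coalgebra.comul (R := k) (g j)) :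
    comul3 k X y = ∑ j, ∑ l, f j ⊗ₜ[k] (c j l ⊗ₜ[k] d j l) := by
  simp only [comul3, LinearMap.comp_apply, ← h, map_sum, lTensor_tmul]
  exact Finset.sum_congr rfl fun j _ => by rw [← hc j, tmul_sum]

lemma comul3_left {n : ℕ} {f g : Fin n → X} {y : X}
    (h : ∑ j, f j ⊗ₜ[k] g j = Coalgebra.comul (R := k) y)
    {na : Fin n → ℕ} {a b : (j : Fin n) → Fin (na j) → X}
    (ha : ∀ j, ∑ l, a j l ⊗ₜ[k] b j l = Coalgebra.comul (R := k) (f j)) :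
    comul3 k X y = ∑ j, ∑ l, a j l ⊗ₜ[k] (b j l ⊗ₜ[k] g j) := by
  have h0 : comul3 k X y = TensorProduct.assoc k X X X
      ((Coalgebra.comul (R := k)).rTensor X (Coalgebra.comul (R := k) y)) := by
    rw [Coalgebra.coassoc_apply]; rfl
  rw [h0, ← h, map_sum, map_sum]
  refine Finset.sum_congr rfl fun j _ => ?_
  rw [rTensor_tmul, ← ha j, sum_tmul, map_sum]
  exact Finset.sum_congr rfl fun l _ => rfl

lemma comul4_N1 {n : ℕ} {f g : Fin n → X} {y : X}
    (h : ∑ j, f j ⊗ₜ[k] g j = Coalgebra.comul (R := k) y)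
    {na : Fin n → ℕ} {a b : (j : Fin n) → Fin (na j) → X}
    (ha : ∀ j, ∑ l, a j l ⊗ₜ[k] b j l = Coalgebra.comul (R := k) (f j))
    {nc : Fin n → ℕ} {c d : (j : Fin n) → Fin (nc j) → X}
    (hc : ∀ j, ∑ l, c j l ⊗ₜ[k] d j l = Coalgebra.comul (R := k) (g j)) :
    comul4 k X y = ∑ j, ∑ m, ∑ l, a j m ⊗ₜ[k] (b j m ⊗ₜ[k] (c j l ⊗ₜ[k] d j l)) := by
  simp only [comul4, LinearMap.comp_apply]
  rw [comul3_left k X h ha]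
  simp only [map_sum, lTensor_tmul]
  refine Finset.sum_congr rfl fun j _ => Finset.sum_congr rfl fun m _ => ?_
  rw [← hc j, tmul_sum, tmul_sum]

lemma comul4_N2 {n : ℕ} {f g : Fin n → X} {y : X}
    (h : ∑ j, f j ⊗ₜ[k] g j = Coalgebra.comul (R := k) y)
    {nc : Fin n → ℕ} {c d : (j : Fin n) → Fin (nc j) → X}
    (hc : ∀ j, ∑ l, c j l ⊗ₜ[k] d j l = Coalgebra.comul (R := k) (g j))
    {nu : (j : Fin n) → Fin (nc j) → ℕ}
    {u v : (j : Fin n) → (l : Fin (nc j)) → Fin (nu j l) → X}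
    (hu : ∀ j l, ∑ m, u j l m ⊗ₜ[k] v j l m = Coalgebra.comul (R := k) (c j l)) :
    comul4 k X y = ∑ j, ∑ l, ∑ m, f j ⊗ₜ[k] (u j l m ⊗ₜ[k] (v j l m ⊗ₜ[k] d j l)) := by
  have keyl : comul4 k X = LinearMap.lTensor X (comul3 k X) ∘ₗ Coalgebra.comul (R := k) := by
    rw [comul4, comul3, LinearMap.lTensor_comp, LinearMap.comp_assoc]
  have key : comul4 k X y = (comul3 k X).lTensor X (Coalgebra.comul (R := k) y) :=
    LinearMap.congr_fun keyl y
  rw [key, ← h, map_sum]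
  refine Finset.sum_congr rfl fun j _ => ?_
  rw [lTensor_tmul, comul3_left k X (hc j) (hu j), tmul_sum]
  exact Finset.sum_congr rfl fun l _ => by rw [tmul_sum]

variable (tr : X ⊗[k] X →ₗ[k] X)

/-- the basic building block `a ⊗ b ↦ b ⊗ tr (p ⊗ a)` -/
def stepm (p : X) : X ⊗[k] X →ₗ[k] X ⊗[k] X :=
  (TensorProduct.comm k X X).toLinearMap ∘ₗ
    TensorProduct.map (tr ∘ₗ TensorProduct.mk k X X p) LinearMap.id

@[simp] lemma stepm_tmul (p a b : X) :
    stepm k X tr p (a ⊗ₜ[k] b) = b ⊗ₜ[k] tr (p ⊗ₜ[k] a) := by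
  simp [stepm]

/-- pattern `e ↦ (e3 ⊗ tr (p⊗e2)) ⊗ (e4 ⊗ tr (q⊗e1))` -/
def pat1 (p q : X) : X ⊗[k] (X ⊗[k] (X ⊗[k] X)) →ₗ[k] (X ⊗[k] X) ⊗[k] (X ⊗[k] X) :=
  TensorProduct.map (stepm k X tr p) (stepm k X tr q) ∘ₗ
    (TensorProduct.tensorTensorTensorComm k X X X X).toLinearMap ∘ₗ
    TensorProduct.map (TensorProduct.comm k X X).toLinearMap LinearMap.id ∘ₗ
    (TensorProduct.assoc k X X (X ⊗[k] X)).symm.toLinearMap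

@[simp] lemma pat1_tmul (p q e1 e2 e3 e4 : X) :
    pat1 k X tr p q (e1 ⊗ₜ[k] (e2 ⊗ₜ[k] (e3 ⊗ₜ[k] e4)))
      = (e3 ⊗ₜ[k] tr (p ⊗ₜ[k] e2)) ⊗ₜ[k] (e4 ⊗ₜ[k] tr (q ⊗ₜ[k] e1)) := by
  simp [pat1]

/-- pattern `e ↦ (e3 ⊗ tr (p⊗e1)) ⊗ (e4 ⊗ tr (q⊗e2))` -/
def pat2 (p q : X) : X ⊗[k] (X ⊗[k] (X ⊗[k] X)) →ₗ[k] (X ⊗[k] X) ⊗[k] (X ⊗[k] X) :=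
  TensorProduct.map (stepm k X tr p) (stepm k X tr q) ∘ₗ
    (TensorProduct.tensorTensorTensorComm k X X X X).toLinearMap ∘ₗ
    (TensorProduct.assoc k X X (X ⊗[k] X)).symm.toLinearMap

@[simp] lemma pat2_tmul (p q e1 e2 e3 e4 : X) :
    pat2 k X tr p q (e1 ⊗ₜ[k] (e2 ⊗ₜ[k] (e3 ⊗ₜ[k] e4)))
      = (e3 ⊗ₜ[k] tr (p ⊗ₜ[k] e1)) ⊗ₜ[k] (e4 ⊗ₜ[k] tr (q ⊗ₜ[k] e2)) := by
  simp [pat2]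

/-- pattern `e ↦ (e2 ⊗ tr (p⊗e1)) ⊗ (e4 ⊗ tr (q⊗e3))` -/
def pat3 (p q : X) : X ⊗[k] (X ⊗[k] (X ⊗[k] X)) →ₗ[k] (X ⊗[k] X) ⊗[k] (X ⊗[k] X) :=
  TensorProduct.map (stepm k X tr p) (stepm k X tr q) ∘ₗ
    (TensorProduct.assoc k X X (X ⊗[k] X)).symm.toLinearMap

@[simp] lemma pat3_tmul (p q e1 e2 e3 e4 : X) :
    pat3 k X tr p q (e1 ⊗ₜ[k] (e2 ⊗ₜ[k] (e3 ⊗ₜ[k] e4)))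
      = (e2 ⊗ₜ[k] tr (p ⊗ₜ[k] e1)) ⊗ₜ[k] (e4 ⊗ₜ[k] tr (q ⊗ₜ[k] e3)) := by
  simp [pat3]

/-- condition (2) implies the comultiplication part of `IsCoalgEndo`. -/
lemma c2_imp_endo_comul (htr : IsCoalgMor k X tr) (hC2 : Gmap k X tr = GmapCop k X tr) :
    comulT k X ∘ₗ ((TensorProduct.comm k X X).toLinearMap ∘ₗ Gmap k X tr)
      = TensorProduct.map ((TensorProduct.comm k X X).toLinearMap ∘ₗ Gmap k X tr)
          ((TensorProduct.comm k X X).toLinearMap ∘ₗ Gmap k X tr) ∘ₗ comulT k X := by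
  apply TensorProduct.ext'
  intro x y
  obtain ⟨m, p, q, hx⟩ := exists_rep k X x
  obtain ⟨n, f, g, hy⟩ := exists_rep k X y
  choose na a b ha using fun j => exists_rep k X (f j)
  choose nc c d hc using fun j => exists_rep k X (g j)
  choose nu u v hu using fun j l => exists_rep k X (c j l)
  have hN1 := comul4_N1 k X hy ha hc
  have hN2 := comul4_N2 k X hy hc hu
  -- left hand side
  have hL : (comulT k X ∘ₗ ((TensorProduct.comm k X X).toLinearMap ∘ₗ Gmap k X tr))
      (x ⊗ₜ[k] y) = ∑ i, pat1 k X tr (p i) (q i) (comul4 k X y) := by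
    rw [LinearMap.comp_apply, s_tmul k X tr x hy, map_sum]
    have hj : ∀ j, comulT k X (g j ⊗ₜ[k] tr (x ⊗ₜ[k] f j))
        = ∑ l, ∑ i, ∑ mm, (c j l ⊗ₜ[k] tr (p i ⊗ₜ[k] b j mm))
            ⊗ₜ[k] (d j l ⊗ₜ[k] tr (q i ⊗ₜ[k] a j mm)) := by
      intro j
      rw [comulT_tmul, ← hc j, comul_tr_cop_rep k X tr htr hC2 hx (ha j)]
      rw [sum_tmul, map_sum]
      refine Finset.sum_congr rfl fun l _ => ?_
      rw [tmul_sum, map_sum]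
      refine Finset.sum_congr rfl fun i _ => ?_
      rw [tmul_sum, map_sum]
      exact Finset.sum_congr rfl fun mm _ => by
        simp
    rw [Finset.sum_congr rfl fun j _ => hj j]
    -- reorder (j,(l,(i,mm))) → (i,(j,(mm,l)))
    have e1 : ∑ j, ∑ l, ∑ i, ∑ mm, (c j l ⊗ₜ[k] tr (p i ⊗ₜ[k] b j mm))
          ⊗ₜ[k] (d j l ⊗ₜ[k] tr (q i ⊗ₜ[k] a j mm))
        = ∑ j, ∑ i, ∑ l, ∑ mm, (c j l ⊗ₜ[k] tr (p i ⊗ₜ[k] b j mm))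
          ⊗ₜ[k] (d j l ⊗ₜ[k] tr (q i ⊗ₜ[k] a j mm)) :=
      Finset.sum_congr rfl fun j _ => Finset.sum_comm
    have e2 : ∑ j, ∑ i, ∑ l, ∑ mm, (c j l ⊗ₜ[k] tr (p i ⊗ₜ[k] b j mm))
          ⊗ₜ[k] (d j l ⊗ₜ[k] tr (q i ⊗ₜ[k] a j mm))
        = ∑ i, ∑ j, ∑ l, ∑ mm, (c j l ⊗ₜ[k] tr (p i ⊗ₜ[k] b j mm))
          ⊗ₜ[k] (d j l ⊗ₜ[k] tr (q i ⊗ₜ[k] a j mm)) := Finset.sum_comm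
    have e3 : ∑ i, ∑ j, ∑ l, ∑ mm, (c j l ⊗ₜ[k] tr (p i ⊗ₜ[k] b j mm))
          ⊗ₜ[k] (d j l ⊗ₜ[k] tr (q i ⊗ₜ[k] a j mm))
        = ∑ i, ∑ j, ∑ mm, ∑ l, (c j l ⊗ₜ[k] tr (p i ⊗ₜ[k] b j mm))
          ⊗ₜ[k] (d j l ⊗ₜ[k] tr (q i ⊗ₜ[k] a j mm)) :=
      Finset.sum_congr rfl fun i _ => Finset.sum_congr rfl fun j _ => Finset.sum_comm
    rw [e1, e2, e3]
    refine Finset.sum_congr rfl fun i _ => ?_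
    rw [hN1, map_sum]
    refine Finset.sum_congr rfl fun j _ => ?_
    rw [map_sum]
    refine Finset.sum_congr rfl fun mm _ => ?_
    rw [map_sum]
    exact Finset.sum_congr rfl fun l _ => by rw [pat1_tmul]
  -- right hand side
  have hR : (TensorProduct.map ((TensorProduct.comm k X X).toLinearMap ∘ₗ Gmap k X tr)
        ((TensorProduct.comm k X X).toLinearMap ∘ₗ Gmap k X tr) ∘ₗ comulT k X)
      (x ⊗ₜ[k] y) = ∑ i, pat3 k X tr (p i) (q i) (comul4 k X y) := by
    rw [LinearMap.comp_apply, comulT_rep k X hx hy, map_sum]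
    refine Finset.sum_congr rfl fun i _ => ?_
    rw [map_sum, hN1, map_sum]
    refine Finset.sum_congr rfl fun j _ => ?_
    rw [TensorProduct.map_tmul, s_tmul k X tr (p i) (ha j), s_tmul k X tr (q i) (hc j),
      sum_tmul, map_sum]
    refine Finset.sum_congr rfl fun mm _ => ?_
    rw [tmul_sum, map_sum]
    exact Finset.sum_congr rfl fun l _ => by rw [pat3_tmul]
  rw [hL, hR]
  refine Finset.sum_congr rfl fun i _ => ?_
  -- swap 1 : pat1 = pat2 on comul4 y
  have sw1 : pat1 k X tr (p i) (q i) (comul4 k X y)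
      = pat2 k X tr (p i) (q i) (comul4 k X y) := by
    rw [hN1]
    simp only [map_sum, pat1_tmul, pat2_tmul]
    refine Finset.sum_congr rfl fun j _ => ?_
    rw [Finset.sum_comm]
    conv_rhs => rw [Finset.sum_comm]
    refine Finset.sum_congr rfl fun l _ => ?_
    have base := c2t_pt k X tr hC2 (ha j) (p i) (q i)
    have := congrArg (TensorProduct.map (TensorProduct.mk k X X (c j l))
      (TensorProduct.mk k X X (d j l))) base
    simp only [map_sum, TensorProduct.map_tmul, TensorProduct.mk_apply] at this
    exact this.symm
  -- swap 2 : pat2 = pat3 on comul4 y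
  have sw2 : pat2 k X tr (p i) (q i) (comul4 k X y)
      = pat3 k X tr (p i) (q i) (comul4 k X y) := by
    rw [hN2]
    simp only [map_sum, pat2_tmul, pat3_tmul]
    refine Finset.sum_congr rfl fun j _ => ?_
    refine Finset.sum_congr rfl fun l _ => ?_
    have base := c2_pt k X tr hC2 (hu j l) (q i)
    have := congrArg (TensorProduct.map
      ((TensorProduct.mk k X X).flip (tr (p i ⊗ₜ[k] f j)))
      (TensorProduct.mk k X X (d j l))) base
    simp only [map_sum, TensorProduct.map_tmul, TensorProduct.mk_apply,
      LinearMap.flip_apply] at this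
    exact this
  rw [sw1, sw2]

end Aux3

section Aux4

open Coalgebra LinearMap

variable (tr : X ⊗[k] X →ₗ[k] X)

/-- the rack-condition right hand side as a linear map -/
def R3 : (X ⊗[k] X) ⊗[k] X →ₗ[k] X :=
  tr ∘ₗ TensorProduct.map tr tr ∘ₗ
    (TensorProduct.tensorTensorTensorComm k X X X X).toLinearMap ∘ₗ
    LinearMap.lTensor (X ⊗[k] X) (comulCop k X)

lemma R3_tmul {n : ℕ} {z1 z2 : Fin n → X} {z : X}
    (hz : ∑ i, z1 i ⊗ₜ[k] z2 i = Coalgebra.comul (R := k) z) (x y : X) :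
    R3 k X tr ((x ⊗ₜ[k] y) ⊗ₜ[k] z)
      = ∑ i, tr (tr (x ⊗ₜ[k] z2 i) ⊗ₜ[k] tr (y ⊗ₜ[k] z1 i)) := by
  have hcop : comulCop k X z = ∑ i, z2 i ⊗ₜ[k] z1 i := by
    simp [comulCop, ← hz, map_sum]
  simp [R3, hcop, tmul_sum, map_sum]

lemma s_tmul2 {n : ℕ} {nl : Fin n → ℕ} {P Q : (j : Fin n) → Fin (nl j) → X} {t : X} (w : X)
    (h : ∑ j, ∑ l, P j l ⊗ₜ[k] Q j l = Coalgebra.comul (R := k) t) :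
    ((TensorProduct.comm k X X).toLinearMap ∘ₗ Gmap k X tr) (w ⊗ₜ[k] t)
      = ∑ j, ∑ l, Q j l ⊗ₜ[k] tr (w ⊗ₜ[k] P j l) := by
  simp only [LinearMap.comp_apply, LinearEquiv.coe_coe, Gmap, lTensor_tmul, ← h,
    tmul_sum, map_sum]
  simp

/-- first pattern map for the braid computation:
`e1⊗(e2⊗(e3⊗e4)) ↦ (e4 ⊗ tr(bb⊗e3)) ⊗ tr (tr(x⊗e2) ⊗ tr(aa⊗e1))` -/
def patA (x aa bb : X) : X ⊗[k] (X ⊗[k] (X ⊗[k] X)) →ₗ[k] (X ⊗[k] X) ⊗[k] X :=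
  TensorProduct.map (TensorProduct.comm k X X).toLinearMap tr ∘ₗ
    TensorProduct.map LinearMap.id (TensorProduct.comm k X X).toLinearMap ∘ₗ
    (TensorProduct.comm k (X ⊗[k] X) (X ⊗[k] X)).toLinearMap ∘ₗ
    (TensorProduct.assoc k X X (X ⊗[k] X)).symm.toLinearMap ∘ₗ
    TensorProduct.map (tr ∘ₗ TensorProduct.mk k X X aa)
      (TensorProduct.map (tr ∘ₗ TensorProduct.mk k X X x)
        (TensorProduct.map (tr ∘ₗ TensorProduct.mk k X X bb) LinearMap.id))

@[simp] lemma patA_tmul (x aa bb e1 e2 e3 e4 : X) :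
    patA k X tr x aa bb (e1 ⊗ₜ[k] (e2 ⊗ₜ[k] (e3 ⊗ₜ[k] e4)))
      = (e4 ⊗ₜ[k] tr (bb ⊗ₜ[k] e3)) ⊗ₜ[k] tr (tr (x ⊗ₜ[k] e2) ⊗ₜ[k] tr (aa ⊗ₜ[k] e1)) := by
  simp [patA]

/-- second pattern map for the braid computation:
`e1⊗(e2⊗(e3⊗e4)) ↦ (e4 ⊗ tr(bb⊗e2)) ⊗ tr (tr(x⊗e3) ⊗ tr(aa⊗e1))` -/
def patB (x aa bb : X) : X ⊗[k] (X ⊗[k] (X ⊗[k] X)) →ₗ[k] (X ⊗[k] X) ⊗[k] X :=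
  TensorProduct.map LinearMap.id tr ∘ₗ
    TensorProduct.map (TensorProduct.comm k X X).toLinearMap
      (TensorProduct.comm k X X).toLinearMap ∘ₗ
    (TensorProduct.comm k (X ⊗[k] X) (X ⊗[k] X)).toLinearMap ∘ₗ
    (TensorProduct.tensorTensorTensorComm k X X X X).toLinearMap ∘ₗ
    (TensorProduct.assoc k X X (X ⊗[k] X)).symm.toLinearMap ∘ₗ
    TensorProduct.map (tr ∘ₗ TensorProduct.mk k X X aa)
      (TensorProduct.map (tr ∘ₗ TensorProduct.mk k X X bb)
        (TensorProduct.map (tr ∘ₗ TensorProduct.mk k X X x) LinearMap.id))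

@[simp] lemma patB_tmul (x aa bb e1 e2 e3 e4 : X) :
    patB k X tr x aa bb (e1 ⊗ₜ[k] (e2 ⊗ₜ[k] (e3 ⊗ₜ[k] e4)))
      = (e4 ⊗ₜ[k] tr (bb ⊗ₜ[k] e2)) ⊗ₜ[k] tr (tr (x ⊗ₜ[k] e3) ⊗ₜ[k] tr (aa ⊗ₜ[k] e1)) := by
  simp [patB]

/-- left hand side of the braid equation on a pure tensor -/
lemma braidL_tmul {x y z : X} {n : ℕ} {f g : Fin n → X}
    (hy : ∑ j, f j ⊗ₜ[k] g j = Coalgebra.comul (R := k) y)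
    {N : ℕ} {z1 z2 : Fin N → X}
    (hz : ∑ i, z1 i ⊗ₜ[k] z2 i = Coalgebra.comul (R := k) z)
    {nc : Fin N → ℕ} {c d : (i : Fin N) → Fin (nc i) → X}
    (hcd : ∀ i, ∑ m, c i m ⊗ₜ[k] d i m = Coalgebra.comul (R := k) (z2 i)) :
    (s12m k X ((TensorProduct.comm k X X).toLinearMap ∘ₗ Gmap k X tr) ∘ₗ
      s23m k X ((TensorProduct.comm k X X).toLinearMap ∘ₗ Gmap k X tr) ∘ₗ
      s12m k X ((TensorProduct.comm k X X).toLinearMap ∘ₗ Gmap k X tr))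
        ((x ⊗ₜ[k] y) ⊗ₜ[k] z)
      = ∑ j, ∑ i, ∑ m, (d i m ⊗ₜ[k] tr (g j ⊗ₜ[k] c i m))
          ⊗ₜ[k] tr (tr (x ⊗ₜ[k] f j) ⊗ₜ[k] z1 i) := by
  set s := (TensorProduct.comm k X X).toLinearMap ∘ₗ Gmap k X tr with hs
  have h1 : s12m k X s ((x ⊗ₜ[k] y) ⊗ₜ[k] z)
      = ∑ j, (g j ⊗ₜ[k] tr (x ⊗ₜ[k] f j)) ⊗ₜ[k] z := by
    rw [s12m, rTensor_tmul, hs, s_tmul k X tr x hy, sum_tmul]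
  have h2 : s23m k X s (∑ j, (g j ⊗ₜ[k] tr (x ⊗ₜ[k] f j)) ⊗ₜ[k] z)
      = ∑ j, ∑ i, (g j ⊗ₜ[k] z2 i) ⊗ₜ[k] tr (tr (x ⊗ₜ[k] f j) ⊗ₜ[k] z1 i) := by
    rw [map_sum]
    refine Finset.sum_congr rfl fun j _ => ?_
    rw [s23m]
    simp only [LinearMap.comp_apply, LinearEquiv.coe_coe, TensorProduct.assoc_tmul,
      lTensor_tmul]
    rw [hs, s_tmul k X tr (tr (x ⊗ₜ[k] f j)) hz, tmul_sum, map_sum]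
    exact Finset.sum_congr rfl fun i _ => by
      simp
  have h3 : s12m k X s (∑ j, ∑ i, (g j ⊗ₜ[k] z2 i) ⊗ₜ[k] tr (tr (x ⊗ₜ[k] f j) ⊗ₜ[k] z1 i))
      = ∑ j, ∑ i, ∑ m, (d i m ⊗ₜ[k] tr (g j ⊗ₜ[k] c i m))
          ⊗ₜ[k] tr (tr (x ⊗ₜ[k] f j) ⊗ₜ[k] z1 i) := by
    rw [map_sum]
    refine Finset.sum_congr rfl fun j _ => ?_
    rw [map_sum]
    refine Finset.sum_congr rfl fun i _ => ?_
    rw [s12m, rTensor_tmul, hs, s_tmul k X tr (g j) (hcd i), sum_tmul]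
  simp only [LinearMap.comp_apply]
  rw [h1, h2, h3]

/-- right hand side of the braid equation on a pure tensor -/
lemma braidR_tmul (htr : IsCoalgMor k X tr) {x y z : X} {n : ℕ} {f g : Fin n → X}
    (hy : ∑ j, f j ⊗ₜ[k] g j = Coalgebra.comul (R := k) y)
    {N : ℕ} {z1 z2 : Fin N → X}
    (hz : ∑ i, z1 i ⊗ₜ[k] z2 i = Coalgebra.comul (R := k) z)
    {nc : Fin N → ℕ} {c d : (i : Fin N) → Fin (nc i) → X}
    (hcd : ∀ i, ∑ m, c i m ⊗ₜ[k] d i m = Coalgebra.comul (R := k) (z2 i))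
    {nu : Fin N → ℕ} {u v : (i : Fin N) → Fin (nu i) → X}
    (huv : ∀ i, ∑ l, u i l ⊗ₜ[k] v i l = Coalgebra.comul (R := k) (z1 i)) :
    (s23m k X ((TensorProduct.comm k X X).toLinearMap ∘ₗ Gmap k X tr) ∘ₗ
      s12m k X ((TensorProduct.comm k X X).toLinearMap ∘ₗ Gmap k X tr) ∘ₗ
      s23m k X ((TensorProduct.comm k X X).toLinearMap ∘ₗ Gmap k X tr))
        ((x ⊗ₜ[k] y) ⊗ₜ[k] z)
      = ∑ i, ∑ m, ∑ j, ∑ l, (d i m ⊗ₜ[k] tr (g j ⊗ₜ[k] v i l))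
          ⊗ₜ[k] tr (tr (x ⊗ₜ[k] c i m) ⊗ₜ[k] tr (f j ⊗ₜ[k] u i l)) := by
  set s := (TensorProduct.comm k X X).toLinearMap ∘ₗ Gmap k X tr with hs
  have h1 : s23m k X s ((x ⊗ₜ[k] y) ⊗ₜ[k] z)
      = ∑ i, (x ⊗ₜ[k] z2 i) ⊗ₜ[k] tr (y ⊗ₜ[k] z1 i) := by
    rw [s23m]
    simp only [LinearMap.comp_apply, LinearEquiv.coe_coe, TensorProduct.assoc_tmul,
      lTensor_tmul]
    rw [hs, s_tmul k X tr y hz, tmul_sum, map_sum]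
    exact Finset.sum_congr rfl fun i _ => by simp
  have h2 : s12m k X s (∑ i, (x ⊗ₜ[k] z2 i) ⊗ₜ[k] tr (y ⊗ₜ[k] z1 i))
      = ∑ i, ∑ m, (d i m ⊗ₜ[k] tr (x ⊗ₜ[k] c i m)) ⊗ₜ[k] tr (y ⊗ₜ[k] z1 i) := by
    rw [map_sum]
    refine Finset.sum_congr rfl fun i _ => ?_
    rw [s12m, rTensor_tmul, hs, s_tmul k X tr x (hcd i), sum_tmul]
  have h3 : s23m k X s (∑ i, ∑ m, (d i m ⊗ₜ[k] tr (x ⊗ₜ[k] c i m)) ⊗ₜ[k] tr (y ⊗ₜ[k] z1 i))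
      = ∑ i, ∑ m, ∑ j, ∑ l, (d i m ⊗ₜ[k] tr (g j ⊗ₜ[k] v i l))
          ⊗ₜ[k] tr (tr (x ⊗ₜ[k] c i m) ⊗ₜ[k] tr (f j ⊗ₜ[k] u i l)) := by
    rw [map_sum]
    refine Finset.sum_congr rfl fun i _ => ?_
    rw [map_sum]
    refine Finset.sum_congr rfl fun m _ => ?_
    rw [s23m]
    simp only [LinearMap.comp_apply, LinearEquiv.coe_coe, TensorProduct.assoc_tmul,
      lTensor_tmul]
    have hrep : ∑ j, ∑ l, tr (f j ⊗ₜ[k] u i l) ⊗ₜ[k] tr (g j ⊗ₜ[k] v i l)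
        = Coalgebra.comul (R := k) (tr (y ⊗ₜ[k] z1 i)) :=
      (comul_tr_rep k X tr htr hy (huv i)).symm
    rw [hs, s_tmul2 k X tr (tr (x ⊗ₜ[k] c i m)) hrep, tmul_sum, map_sum]
    refine Finset.sum_congr rfl fun j _ => ?_
    rw [tmul_sum, map_sum]
    exact Finset.sum_congr rfl fun l _ => by simp
  simp only [LinearMap.comp_apply]
  rw [h1, h2, h3]

/-- the braid relation forces the rack condition (3) -/
lemma braid_imp_c3 (htr : IsCoalgMor k X tr)
    (hb : IsBraidSol k X ((TensorProduct.comm k X X).toLinearMap ∘ₗ Gmap k X tr)) :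
    tr ∘ₗ LinearMap.rTensor X tr = R3 k X tr := by
  apply TensorProduct.ext_threefold
  intro x y z
  obtain ⟨n, f, g, hy⟩ := exists_rep k X y
  obtain ⟨N, z1, z2, hz⟩ := exists_rep k X z
  choose nc c d hcd using fun i => exists_rep k X (z2 i)
  choose nu u v huv using fun i => exists_rep k X (z1 i)
  have hb' := LinearMap.congr_fun hb ((x ⊗ₜ[k] y) ⊗ₜ[k] z)
  rw [braidL_tmul k X tr hy hz hcd, braidR_tmul k X tr htr hy hz hcd huv] at hb'
  -- apply `K := (ε ⊗ ε ⊗ id)` to both sides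
  set K : (X ⊗[k] X) ⊗[k] X →ₗ[k] X :=
    (TensorProduct.lid k X).toLinearMap ∘ₗ LinearMap.rTensor X (counitT k X) with hK
  have hKt : ∀ (a b w : X), K ((a ⊗ₜ[k] b) ⊗ₜ[k] w)
      = (Coalgebra.counit (R := k) a * Coalgebra.counit (R := k) b) • w := by
    intro a b w; simp [hK]
  have hKb := congrArg K hb'
  simp only [map_sum, hKt, counit_tr k X tr htr] at hKb
  -- collapse the left hand side
  have hLc : ∑ j, ∑ i, ∑ m,
      (Coalgebra.counit (R := k) (d i m) *
        (Coalgebra.counit (R := k) (g j) * Coalgebra.counit (R := k) (c i m)))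
        • tr (tr (x ⊗ₜ[k] f j) ⊗ₜ[k] z1 i)
      = tr (tr (x ⊗ₜ[k] y) ⊗ₜ[k] z) := by
    have step1 : ∀ j i, ∑ m,
        (Coalgebra.counit (R := k) (d i m) *
          (Coalgebra.counit (R := k) (g j) * Coalgebra.counit (R := k) (c i m)))
          • tr (tr (x ⊗ₜ[k] f j) ⊗ₜ[k] z1 i)
        = Coalgebra.counit (R := k) (g j) • Coalgebra.counit (R := k) (z2 i)
          • tr (tr (x ⊗ₜ[k] f j) ⊗ₜ[k] z1 i) := by
      intro j i
      rw [← Finset.sum_smul, smul_smul]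
      congr 1
      rw [← collapse_eps k X (hcd i), Finset.mul_sum]
      exact Finset.sum_congr rfl fun m _ => by ring
    rw [Finset.sum_congr rfl fun j _ => Finset.sum_congr rfl fun i _ => step1 j i]
    have step2 : ∀ j, ∑ i, Coalgebra.counit (R := k) (g j) •
        Coalgebra.counit (R := k) (z2 i) • tr (tr (x ⊗ₜ[k] f j) ⊗ₜ[k] z1 i)
        = Coalgebra.counit (R := k) (g j) • tr (tr (x ⊗ₜ[k] f j) ⊗ₜ[k] z) := by
      intro j
      rw [← Finset.smul_sum]
      congr 1
      exact collapse_r k X hz (tr ∘ₗ TensorProduct.mk k X X (tr (x ⊗ₜ[k] f j)))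
    rw [Finset.sum_congr rfl fun j _ => step2 j]
    exact collapse_r k X hy
      (tr ∘ₗ (TensorProduct.mk k X X).flip z ∘ₗ tr ∘ₗ TensorProduct.mk k X X x)
  -- collapse the right hand side
  have hRc : ∑ i, ∑ m, ∑ j, ∑ l,
      (Coalgebra.counit (R := k) (d i m) *
        (Coalgebra.counit (R := k) (g j) * Coalgebra.counit (R := k) (v i l)))
        • tr (tr (x ⊗ₜ[k] c i m) ⊗ₜ[k] tr (f j ⊗ₜ[k] u i l))
      = ∑ i, tr (tr (x ⊗ₜ[k] z2 i) ⊗ₜ[k] tr (y ⊗ₜ[k] z1 i)) := by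
    refine Finset.sum_congr rfl fun i _ => ?_
    have step1 : ∀ m j, ∑ l,
        (Coalgebra.counit (R := k) (d i m) *
          (Coalgebra.counit (R := k) (g j) * Coalgebra.counit (R := k) (v i l)))
          • tr (tr (x ⊗ₜ[k] c i m) ⊗ₜ[k] tr (f j ⊗ₜ[k] u i l))
        = Coalgebra.counit (R := k) (d i m) • Coalgebra.counit (R := k) (g j)
          • tr (tr (x ⊗ₜ[k] c i m) ⊗ₜ[k] tr (f j ⊗ₜ[k] z1 i)) := by
      intro m j
      rw [smul_smul]
      have := collapse_r k X (huv i)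
        (tr ∘ₗ TensorProduct.mk k X X (tr (x ⊗ₜ[k] c i m)) ∘ₗ tr ∘ₗ
          TensorProduct.mk k X X (f j))
      simp only [LinearMap.comp_apply, TensorProduct.mk_apply] at this
      rw [← this, Finset.smul_sum]
      exact Finset.sum_congr rfl fun l _ => by rw [smul_smul]; congr 1; ring
    rw [Finset.sum_congr rfl fun m _ => Finset.sum_congr rfl fun j _ => step1 m j]
    have step2 : ∀ m, ∑ j, Coalgebra.counit (R := k) (d i m) •
        Coalgebra.counit (R := k) (g j)
          • tr (tr (x ⊗ₜ[k] c i m) ⊗ₜ[k] tr (f j ⊗ₜ[k] z1 i))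
        = Coalgebra.counit (R := k) (d i m)
          • tr (tr (x ⊗ₜ[k] c i m) ⊗ₜ[k] tr (y ⊗ₜ[k] z1 i)) := by
      intro m
      rw [← Finset.smul_sum]
      congr 1
      have := collapse_r k X hy
        (tr ∘ₗ TensorProduct.mk k X X (tr (x ⊗ₜ[k] c i m)) ∘ₗ tr ∘ₗ
          (TensorProduct.mk k X X).flip (z1 i))
      simp only [LinearMap.comp_apply, TensorProduct.mk_apply, LinearMap.flip_apply] at this
      exact this
    rw [Finset.sum_congr rfl fun m _ => step2 m]
    have := collapse_r k X (hcd i)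
      (tr ∘ₗ (TensorProduct.mk k X X).flip (tr (y ⊗ₜ[k] z1 i)) ∘ₗ tr ∘ₗ
        TensorProduct.mk k X X x)
    simp only [LinearMap.comp_apply, TensorProduct.mk_apply, LinearMap.flip_apply] at this
    exact this
  rw [hLc, hRc] at hKb
  rw [R3_tmul k X tr hz]
  simpa using hKb

end Aux4

section Aux5

open Coalgebra LinearMap

variable (tr : X ⊗[k] X →ₗ[k] X)

/-- conditions (2) and (3) imply the braid relation -/
lemma braid_of (htr : IsCoalgMor k X tr) (hC2 : Gmap k X tr = GmapCop k X tr)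
    (hC3 : tr ∘ₗ LinearMap.rTensor X tr = R3 k X tr) :
    IsBraidSol k X ((TensorProduct.comm k X X).toLinearMap ∘ₗ Gmap k X tr) := by
  unfold IsBraidSol
  apply TensorProduct.ext_threefold
  intro x y z
  obtain ⟨n, f, g, hy⟩ := exists_rep k X y
  obtain ⟨N, z1, z2, hz⟩ := exists_rep k X z
  choose nc c d hcd using fun i => exists_rep k X (z2 i)
  choose nu u v huv using fun i => exists_rep k X (z1 i)
  choose nw w w' hww using fun i l => exists_rep k X (c i l)
  have hN1 := comul4_N1 k X hz huv hcd
  have hN2 := comul4_N2 k X hz hcd hww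
  -- the left hand side equals `∑ j, patA x (f j) (g j) (comul4 z)`
  have hL : (s12m k X ((TensorProduct.comm k X X).toLinearMap ∘ₗ Gmap k X tr) ∘ₗ
      s23m k X ((TensorProduct.comm k X X).toLinearMap ∘ₗ Gmap k X tr) ∘ₗ
      s12m k X ((TensorProduct.comm k X X).toLinearMap ∘ₗ Gmap k X tr))
        ((x ⊗ₜ[k] y) ⊗ₜ[k] z)
      = ∑ j, patA k X tr x (f j) (g j) (comul4 k X z) := by
    rw [braidL_tmul k X tr hy hz hcd]
    have hc3 : ∀ j i, tr (tr (x ⊗ₜ[k] f j) ⊗ₜ[k] z1 i)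
        = ∑ l, tr (tr (x ⊗ₜ[k] v i l) ⊗ₜ[k] tr (f j ⊗ₜ[k] u i l)) := by
      intro j i
      have h0 := LinearMap.congr_fun hC3 ((x ⊗ₜ[k] f j) ⊗ₜ[k] z1 i)
      rw [R3_tmul k X tr (huv i)] at h0
      simpa using h0
    have e0 : ∀ j, ∑ i, ∑ m, (d i m ⊗ₜ[k] tr (g j ⊗ₜ[k] c i m))
          ⊗ₜ[k] tr (tr (x ⊗ₜ[k] f j) ⊗ₜ[k] z1 i)
        = ∑ i, ∑ l, ∑ m, (d i m ⊗ₜ[k] tr (g j ⊗ₜ[k] c i m))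
          ⊗ₜ[k] tr (tr (x ⊗ₜ[k] v i l) ⊗ₜ[k] tr (f j ⊗ₜ[k] u i l)) := by
      intro j
      refine Finset.sum_congr rfl fun i _ => ?_
      rw [Finset.sum_comm]
      refine Finset.sum_congr rfl fun m _ => ?_
      rw [hc3 j i, tmul_sum]
    rw [Finset.sum_congr rfl fun j _ => e0 j]
    refine Finset.sum_congr rfl fun j _ => ?_
    rw [hN1]
    simp only [map_sum, patA_tmul]
  -- the right hand side equals `∑ j, patB x (f j) (g j) (comul4 z)`
  have hR : (s23m k X ((TensorProduct.comm k X X).toLinearMap ∘ₗ Gmap k X tr) ∘ₗ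
      s12m k X ((TensorProduct.comm k X X).toLinearMap ∘ₗ Gmap k X tr) ∘ₗ
      s23m k X ((TensorProduct.comm k X X).toLinearMap ∘ₗ Gmap k X tr))
        ((x ⊗ₜ[k] y) ⊗ₜ[k] z)
      = ∑ j, patB k X tr x (f j) (g j) (comul4 k X z) := by
    rw [braidR_tmul k X tr htr hy hz hcd huv]
    have e1 : ∑ i, ∑ m, ∑ j, ∑ l, (d i m ⊗ₜ[k] tr (g j ⊗ₜ[k] v i l))
          ⊗ₜ[k] tr (tr (x ⊗ₜ[k] c i m) ⊗ₜ[k] tr (f j ⊗ₜ[k] u i l))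
        = ∑ j, ∑ i, ∑ m, ∑ l, (d i m ⊗ₜ[k] tr (g j ⊗ₜ[k] v i l))
          ⊗ₜ[k] tr (tr (x ⊗ₜ[k] c i m) ⊗ₜ[k] tr (f j ⊗ₜ[k] u i l)) := by
      rw [← Finset.sum_comm]
      exact Finset.sum_congr rfl fun i _ => Finset.sum_comm
    rw [e1]
    refine Finset.sum_congr rfl fun j _ => ?_
    rw [hN1]
    simp only [map_sum, patB_tmul]
    refine Finset.sum_congr rfl fun i _ => ?_
    rw [Finset.sum_comm]
  rw [hL, hR]
  -- swap the two middle legs using condition (2)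
  refine Finset.sum_congr rfl fun j _ => ?_
  rw [hN2]
  simp only [map_sum, patA_tmul, patB_tmul]
  refine Finset.sum_congr rfl fun i _ => ?_
  refine Finset.sum_congr rfl fun l _ => ?_
  have base := c2t_pt k X tr hC2 (hww i l) (g j) x
  have h2 := congrArg (TensorProduct.map (TensorProduct.mk k X X (d i l))
    (tr ∘ₗ (TensorProduct.mk k X X).flip (tr (f j ⊗ₜ[k] z1 i)))) base
  simp only [map_sum, TensorProduct.map_tmul, TensorProduct.mk_apply,
    LinearMap.comp_apply, LinearMap.flip_apply] at h2
  exact h2.symm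
end Aux5


/-- `s (x⊗y) := y₍₂₎ ⊗ (x ◁ y₍₁₎)` is a left non-degenerate set-theoretic
type solution of the braid equation iff `(X, ◁)` is a rack coalgebra. -/
theorem stmt_8 (tr : X ⊗[k] X →ₗ[k] X) (htr : IsCoalgMor k X tr) :
    (IsCoalgEndo k X ((TensorProduct.comm k X X).toLinearMap ∘ₗ Gmap k X tr) ∧
      IsBraidSol k X ((TensorProduct.comm k X X).toLinearMap ∘ₗ Gmap k X tr) ∧
      LeftNonDeg k X ((TensorProduct.comm k X X).toLinearMap ∘ₗ Gmap k X tr)) ↔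
    (Function.Bijective (Gmap k X tr) ∧
      (∀ (x y : X) (n : ℕ) (y1 y2 : Fin n → X),
        (∑ i, y1 i ⊗ₜ[k] y2 i) = Coalgebra.comul (R := k) y →
        (∑ i, y2 i ⊗ₜ[k] tr (x ⊗ₜ[k] y1 i)) = ∑ i, y1 i ⊗ₜ[k] tr (x ⊗ₜ[k] y2 i)) ∧
      (∀ (x y z : X) (n : ℕ) (z1 z2 : Fin n → X),
        (∑ i, z1 i ⊗ₜ[k] z2 i) = Coalgebra.comul (R := k) z →
        tr (tr (x ⊗ₜ[k] y) ⊗ₜ[k] z) =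
          ∑ i, tr (tr (x ⊗ₜ[k] z2 i) ⊗ₜ[k] tr (y ⊗ₜ[k] z1 i)))) := by
  constructor
  · rintro ⟨hendo, hbraid, hnd⟩
    have hC2 : Gmap k X tr = GmapCop k X tr := endo_comul_imp k X tr htr hendo.1
    have hC3 : tr ∘ₗ LinearMap.rTensor X tr = R3 k X tr := braid_imp_c3 k X tr htr hbraid
    refine ⟨?_, ?_, ?_⟩
    · have h0 : LeftNonDeg k X ((TensorProduct.comm k X X).toLinearMap ∘ₗ Gmap k X tr)
          = Function.Bijective (Gmap k X
            (comp2 k X ((TensorProduct.comm k X X).toLinearMap ∘ₗ Gmap k X tr))) := rfl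
      rw [h0, comp2_s k X tr] at hnd
      exact hnd
    · intro x y n y1 y2 hrep
      exact c2_pt k X tr hC2 hrep x
    · intro x y z n z1 z2 hrep
      have h0 := LinearMap.congr_fun hC3 ((x ⊗ₜ[k] y) ⊗ₜ[k] z)
      rw [R3_tmul k X tr hrep] at h0
      simpa using h0
  · rintro ⟨hbij, h2, h3⟩
    have hC2 : Gmap k X tr = GmapCop k X tr := by
      have hs : (TensorProduct.comm k X X).toLinearMap ∘ₗ Gmap k X tr
          = (TensorProduct.comm k X X).toLinearMap ∘ₗ GmapCop k X tr := by
        apply TensorProduct.ext'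
        intro x y
        obtain ⟨n, f, g, h⟩ := exists_rep k X y
        rw [s_tmul k X tr x h, s'_tmul k X tr x h]
        exact h2 x y n f g h
      apply LinearMap.ext
      intro u
      have h4 := LinearMap.congr_fun hs u
      simp only [LinearMap.comp_apply, LinearEquiv.coe_coe] at h4
      exact (TensorProduct.comm k X X).injective h4
    have hC3 : tr ∘ₗ LinearMap.rTensor X tr = R3 k X tr := by
      apply TensorProduct.ext_threefold
      intro x y z
      obtain ⟨n, z1, z2, hz⟩ := exists_rep k X z
      rw [R3_tmul k X tr hz]
      have := h3 x y z n z1 z2 hz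
      simpa using this
    refine ⟨⟨c2_imp_endo_comul k X tr htr hC2, counitT_s k X tr htr⟩,
      braid_of k X tr htr hC2 hC3, ?_⟩
    have h0 : LeftNonDeg k X ((TensorProduct.comm k X X).toLinearMap ∘ₗ Gmap k X tr)
        = Function.Bijective (Gmap k X
          (comp2 k X ((TensorProduct.comm k X X).toLinearMap ∘ₗ Gmap k X tr))) := rfl
    rw [h0, comp2_s k X tr]
    exact hbij


end
end

section
/- Let ℋ = (H; ·, ⊥) be a Hopf q-brace with bijective antipode S. Define h × k := (k·h_(1))h_(2). Then the identity map of H is invertible with respect to the convolution product built from the comultiplication of H^cop and the multiplication ×, and its inverse is the map T_×(h) := S(h_(1))·S^{-1}(h_(2)); that is, h_(2) × T_×(h_(1)) = T_×(h_(2)) × h_(1) = ε(h)1 for all h ∈ H. Moreover (k×l)·h = (k·h_(1)) × (l·h_(2)) for all h,k,l ∈ H. -/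
open TensorProduct

noncomputable section

variable (k : Type) [Field k] (X : Type) [AddCommGroup X] [Module k X] [Coalgebra k X]

variable (H : Type) [Ring H] [HopfAlgebra k H]

/-- `(H, ·)` is a right module over `H^op`: `h·1 = h` and `h·(ab) = (h·b)·a` -/
def RightOpModule (p : H ⊗[k] H →ₗ[k] H) : Prop :=
  (∀ h : H, p (h ⊗ₜ[k] (1 : H)) = h) ∧
  ∀ h a b : H, p (h ⊗ₜ[k] (a * b)) = p (p (h ⊗ₜ[k] b) ⊗ₜ[k] a)

/-- the Hopf q-brace distributivity laws -/
def QBraceDistrib (p d : H ⊗[k] H →ₗ[k] H) : Prop :=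
  ∀ (h kk l : H) (n m : ℕ) (l1 l2 : Fin n → H) (k1 k2 : Fin m → H),
    (∑ i, l1 i ⊗ₜ[k] l2 i) = Coalgebra.comul (R := k) l →
    (∑ j, k1 j ⊗ₜ[k] k2 j) = Coalgebra.comul (R := k) kk →
    (p ((h * kk) ⊗ₜ[k] l) =
        ∑ i, ∑ j, p (h ⊗ₜ[k] d (l1 i ⊗ₜ[k] k2 j)) * p (k1 j ⊗ₜ[k] l2 i)) ∧
    (d ((h * kk) ⊗ₜ[k] l) =
        ∑ i, ∑ j, d (h ⊗ₜ[k] p (l1 i ⊗ₜ[k] k2 j)) * d (k1 j ⊗ₜ[k] l2 i))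

/-- A Hopf q-brace: a regular q-cycle coalgebra on a Hopf algebra with
right `H^op`-module structures and the distributivity laws -/
def IsHopfQBrace (p d : H ⊗[k] H →ₗ[k] H) : Prop :=
  IsCoalgMorCop k H p ∧ IsCoalgMorCop k H d ∧ ExchangeId k H p d ∧
  Function.Bijective (Gmap k H p) ∧ Function.Bijective (GmapCop k H d) ∧
  QCycleConds k H p d ∧ RightOpModule k H p ∧ RightOpModule k H d ∧ QBraceDistrib k H p d

/-- the Hopf skew-brace condition `(k⊥h₍₂₎)h₍₁₎ = (h·k₍₁₎)k₍₂₎` -/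
def SkewCond (p d : H ⊗[k] H →ₗ[k] H) : Prop :=
  ∀ (h kk : H) (n m : ℕ) (h1 h2 : Fin n → H) (k1 k2 : Fin m → H),
    (∑ i, h1 i ⊗ₜ[k] h2 i) = Coalgebra.comul (R := k) h →
    (∑ j, k1 j ⊗ₜ[k] k2 j) = Coalgebra.comul (R := k) kk →
    (∑ i, d (kk ⊗ₜ[k] h2 i) * h1 i) = ∑ j, p (h ⊗ₜ[k] k1 j) * k2 j

def IsHopfSkewBrace (p d : H ⊗[k] H →ₗ[k] H) : Prop :=
  IsHopfQBrace k H p d ∧ SkewCond k H p d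

/-- weak braiding operator conditions -/
def IsWeakBraidingOp (s : H ⊗[k] H →ₗ[k] H ⊗[k] H) : Prop :=
  (s ∘ₗ LinearMap.rTensor H (LinearMap.mul' k H) =
    LinearMap.lTensor H (LinearMap.mul' k H) ∘ₗ (TensorProduct.assoc k H H H).toLinearMap ∘ₗ
      LinearMap.rTensor H s ∘ₗ (TensorProduct.assoc k H H H).symm.toLinearMap ∘ₗ
      LinearMap.lTensor H s ∘ₗ (TensorProduct.assoc k H H H).toLinearMap) ∧
  (s ∘ₗ LinearMap.lTensor H (LinearMap.mul' k H) =
    LinearMap.rTensor H (LinearMap.mul' k H) ∘ₗ (TensorProduct.assoc k H H H).symm.toLinearMap ∘ₗ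
      LinearMap.lTensor H s ∘ₗ (TensorProduct.assoc k H H H).toLinearMap ∘ₗ
      LinearMap.rTensor H s ∘ₗ (TensorProduct.assoc k H H H).symm.toLinearMap) ∧
  (∀ h : H, s ((1 : H) ⊗ₜ[k] h) = h ⊗ₜ[k] (1 : H)) ∧
  (∀ h : H, s (h ⊗ₜ[k] (1 : H)) = (1 : H) ⊗ₜ[k] h)

/-- `(H, H, α, β)` is a matched pair of bialgebras -/
def IsMatchedPairSelf (α β : H ⊗[k] H →ₗ[k] H) : Prop :=
  ((∀ l : H, α (l ⊗ₜ[k] (1 : H)) = l) ∧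
   (∀ l a b : H, α (l ⊗ₜ[k] (a * b)) = α (α (l ⊗ₜ[k] a) ⊗ₜ[k] b))) ∧
  IsCoalgMor k H α ∧
  ((∀ h : H, β ((1 : H) ⊗ₜ[k] h) = h) ∧
   (∀ a b h : H, β ((a * b) ⊗ₜ[k] h) = β (a ⊗ₜ[k] β (b ⊗ₜ[k] h)))) ∧
  IsCoalgMor k H β ∧
  (∀ (l h h' : H) (n m : ℕ) (l1 l2 : Fin n → H) (h1 h2 : Fin m → H),
     (∑ i, l1 i ⊗ₜ[k] l2 i) = Coalgebra.comul (R := k) l →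
     (∑ j, h1 j ⊗ₜ[k] h2 j) = Coalgebra.comul (R := k) h →
     β (l ⊗ₜ[k] (h * h')) =
       ∑ i, ∑ j, β (l1 i ⊗ₜ[k] h1 j) * β (α (l2 i ⊗ₜ[k] h2 j) ⊗ₜ[k] h')) ∧
  (∀ (l' l h : H) (n m : ℕ) (l1 l2 : Fin n → H) (h1 h2 : Fin m → H),
     (∑ i, l1 i ⊗ₜ[k] l2 i) = Coalgebra.comul (R := k) l →
     (∑ j, h1 j ⊗ₜ[k] h2 j) = Coalgebra.comul (R := k) h →
     α ((l' * l) ⊗ₜ[k] h) =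
       ∑ i, ∑ j, α (l' ⊗ₜ[k] β (l1 i ⊗ₜ[k] h1 j)) * α (l2 i ⊗ₜ[k] h2 j)) ∧
  (∀ h : H, α ((1 : H) ⊗ₜ[k] h) = Coalgebra.counit (R := k) h • (1 : H)) ∧
  (∀ l : H, β (l ⊗ₜ[k] (1 : H)) = Coalgebra.counit (R := k) l • (1 : H)) ∧
  (∀ (l h : H) (n m : ℕ) (l1 l2 : Fin n → H) (h1 h2 : Fin m → H),
     (∑ i, l1 i ⊗ₜ[k] l2 i) = Coalgebra.comul (R := k) l →
     (∑ j, h1 j ⊗ₜ[k] h2 j) = Coalgebra.comul (R := k) h →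
     (∑ i, ∑ j, β (l1 i ⊗ₜ[k] h1 j) ⊗ₜ[k] α (l2 i ⊗ₜ[k] h2 j)) =
       ∑ i, ∑ j, β (l2 i ⊗ₜ[k] h2 j) ⊗ₜ[k] α (l1 i ⊗ₜ[k] h1 j))

/-- the operation `h × kk := (kk·h₍₁₎)h₍₂₎` -/
def tmOp (p : H ⊗[k] H →ₗ[k] H) : H ⊗[k] H →ₗ[k] H :=
  LinearMap.mul' k H ∘ₗ Gmap k H p ∘ₗ (TensorProduct.comm k H H).toLinearMap

/-- the map `T_× (h) := S(h₍₁₎) · S⁻¹(h₍₂₎)` -/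
def TOp (p : H ⊗[k] H →ₗ[k] H) (Sinv : H →ₗ[k] H) : H →ₗ[k] H :=
  p ∘ₗ TensorProduct.map (HopfAlgebra.antipode (R := k) (A := H)) Sinv ∘ₗ
    Coalgebra.comul (R := k)

/-! Write `x·y = p (x ⊗ y)`, `x ⊥ y = d (x ⊗ y)`, `h × k = tmOp (h ⊗ k) = (k·h₁)h₂` and
`T = T_×`. The compatibility `(k×l)·h = (k·h₁)×(l·h₂)` comes from distributivity of `·` over the
product of `H`, the exchange identity, the first q-cycle condition and coassociativity.
The module law gives `T(h₁)·h₂ = S(h)`, hence `h₂ × T(h₁) = S(h₁)h₂ = ε(h)1`.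
For `T(h₂) × h₁`, use `(x·e₁)·S⁻¹(e₂) = ε(e)x` to split off two more factors `h₃, h₄`, move `·h₃`
inside `×` by the compatibility and use `T(h₁)·h₂ = S(h)` again; what is left is
`(h₁S(h₂))·S⁻¹(h₃) = 1·S⁻¹(h)`, which is `ε(h)1` because `1·(-)` is a convolution idempotent with
a right convolution inverse. -/

namespace Coalgebra

open TensorProduct

-- `Coalgebra.Repr` indexed by `Fin n`: the hypotheses quantify over representations of this form.
structure FinRepr (R : Type*) {C : Type*} [CommSemiring R] [AddCommMonoid C] [Module R C]
    [CoalgebraStruct R C] (a : C) where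
  n : ℕ
  left : Fin n → C
  right : Fin n → C
  eq : ∑ i, left i ⊗ₜ[R] right i = comul (R := R) a

namespace FinRepr

variable {R C M : Type*} [CommSemiring R] [AddCommMonoid C] [Module R C]
  [AddCommMonoid M] [Module R M]

section CoalgebraStruct

variable [CoalgebraStruct R C]

variable (R) in
noncomputable def arbitrary (a : C) : FinRepr R a where
  n := (ℛ R a).index.card
  left i := ((ℛ R a).index.equivFin.symm i : C × C).1
  right i := ((ℛ R a).index.equivFin.symm i : C × C).2
  eq := by
    rw [← (ℛ R a).eq, ← Finset.sum_coe_sort (ℛ R a).index]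
    exact Equiv.sum_comp (ℛ R a).index.equivFin.symm
      (fun x => (ℛ R a).left x ⊗ₜ[R] (ℛ R a).right x)

def toRepr {a : C} (ρ : FinRepr R a) : Repr R a (Fin ρ.n) :=
  ⟨Finset.univ, ρ.left, ρ.right, ρ.eq⟩

end CoalgebraStruct

variable [Coalgebra R C] {a : C} (ρ : FinRepr R a)

theorem sum_counit_smul_left : ∑ i, counit (R := R) (ρ.left i) • ρ.right i = a :=
  sum_counit_smul ρ.toRepr

theorem sum_counit_smul_right : ∑ i, counit (R := R) (ρ.right i) • ρ.left i = a := by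
  simpa [toRepr] using congrArg (_root_.TensorProduct.rid R C) (sum_tmul_counit_eq ρ.toRepr)

theorem sum_assoc (ρl : ∀ i, FinRepr R (ρ.left i)) (ρr : ∀ i, FinRepr R (ρ.right i)) :
    ∑ i, ∑ j, (ρl i).left j ⊗ₜ[R] ((ρl i).right j ⊗ₜ[R] ρ.right i) =
      ∑ i, ∑ j, ρ.left i ⊗ₜ[R] ((ρr i).left j ⊗ₜ[R] (ρr i).right j) :=
  sum_tmul_tmul_eq ρ.toRepr (fun i => (ρl i).toRepr) (fun i => (ρr i).toRepr)

theorem map_sum_assoc (L : C ⊗[R] (C ⊗[R] C) →ₗ[R] M)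
    (ρl : ∀ i, FinRepr R (ρ.left i)) (ρr : ∀ i, FinRepr R (ρ.right i)) :
    ∑ i, ∑ j, L ((ρl i).left j ⊗ₜ[R] ((ρl i).right j ⊗ₜ[R] ρ.right i)) =
      ∑ i, ∑ j, L (ρ.left i ⊗ₜ[R] ((ρr i).left j ⊗ₜ[R] (ρr i).right j)) := by
  simpa only [map_sum] using congrArg L (ρ.sum_assoc ρl ρr)

end FinRepr

end Coalgebra

namespace HopfAlgebra

open Coalgebra TensorProduct WithConv

variable {R A : Type*} [CommSemiring R] [Semiring A] [HopfAlgebra R A]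

-- In the convolution monoid of maps `A → A ⊗ A`, `δ = ι₁ * ι₂` and
-- `(S ⊗ S) ∘ τ ∘ δ = (ι₂ ∘ S) * (ι₁ ∘ S)`, where `ιₖ` are the algebra inclusions and `ιₖ ∘ S` is
-- inverse to `ιₖ`; so both sides are inverses of `δ`.
theorem comul_comp_antipode :
    comul ∘ₗ antipode R = map (antipode R) (antipode R) ∘ₗ
      (TensorProduct.comm R A A).toLinearMap ∘ₗ comul (R := R) (A := A) := by
  let ι₁ : A →ₐ[R] A ⊗[R] A := Algebra.TensorProduct.includeLeft
  let ι₂ : A →ₐ[R] A ⊗[R] A := Algebra.TensorProduct.includeRight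
  let G := map (antipode R) (antipode R) ∘ₗ
    (TensorProduct.comm R A A).toLinearMap ∘ₗ comul (R := R) (A := A)
  have inv (ι : A →ₐ[R] A ⊗[R] A) :
      toConv (ι.toLinearMap ∘ₗ antipode R) * toConv ι.toLinearMap = 1 := by
    have h := LinearMap.algHom_comp_convMul_distrib ι (toConv (antipode R)) (toConv .id)
    rw [LinearMap.antipode_mul_id] at h
    ext a
    simpa using (LinearMap.congr_fun h a).symm
  have hδ : toConv (comul (R := R) (A := A)) =
      toConv ι₁.toLinearMap * toConv ι₂.toLinearMap := by
    ext a
    rw [(ℛ R a).convMul_apply]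
    simp [ι₁, ι₂, ← (ℛ R a).eq]
  have hG : toConv G =
      toConv (ι₂.toLinearMap ∘ₗ antipode R) * toConv (ι₁.toLinearMap ∘ₗ antipode R) := by
    ext a
    rw [(ℛ R a).convMul_apply]
    simp [G, ι₁, ι₂, ← (ℛ R a).eq]
  have hGδ : toConv G * toConv comul = 1 := by
    rw [hG, hδ, mul_assoc, ← mul_assoc _ (toConv ι₁.toLinearMap), inv, one_mul, inv]
  exact congrArg ofConv (left_inv_eq_right_inv hGδ LinearMap.comul_right_inv).symm

variable {Sinv : A →ₗ[R] A}

theorem counit_antipodeInv (hS1 : antipode R ∘ₗ Sinv = LinearMap.id) (a : A) :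
    counit (R := R) (Sinv a) = counit (R := R) a := by
  simpa using congrArg (counit (R := R)) (LinearMap.congr_fun hS1 a)

theorem eq_algebraMap_of_antipode_eq (hS2 : Sinv ∘ₗ antipode R = LinearMap.id) {x : A} {r : R}
    (h : antipode R x = algebraMap R A r) : x = algebraMap R A r := by
  have hSinvS (y : A) : Sinv (antipode R y) = y := LinearMap.congr_fun hS2 y
  have h1 : Sinv 1 = 1 := by simpa using hSinvS 1
  rw [← hSinvS x, h, Algebra.algebraMap_eq_smul_one, map_smul, h1]

end HopfAlgebra

namespace Coalgebra.FinRepr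

open HopfAlgebra TensorProduct

section Bialgebra

variable {R A : Type*} [CommSemiring R] [Semiring A] [Bialgebra R A]

abbrev one : FinRepr R (1 : A) :=
  ⟨1, fun _ => 1, fun _ => 1, by simp [Algebra.TensorProduct.one_def]⟩

end Bialgebra

variable {R A : Type*} [CommSemiring R] [Semiring A] [HopfAlgebra R A] {a : A}

theorem sum_antipode_mul (ρ : FinRepr R a) :
    ∑ i, antipode R (ρ.left i) * ρ.right i = algebraMap R A (counit a) :=
  sum_antipode_mul_eq_algebraMap_counit ρ.toRepr

theorem sum_mul_antipode (ρ : FinRepr R a) :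
    ∑ i, ρ.left i * antipode R (ρ.right i) = algebraMap R A (counit a) :=
  sum_mul_antipode_eq_algebraMap_counit ρ.toRepr

def ofAntipode (ρ : FinRepr R a) : FinRepr R (antipode R a) where
  n := ρ.n
  left i := antipode R (ρ.right i)
  right i := antipode R (ρ.left i)
  eq := by
    rw [← LinearMap.comp_apply (comul (R := R)), comul_comp_antipode]
    simp [← ρ.eq]

variable {Sinv : A →ₗ[R] A}

theorem sum_mul_antipodeInv (hS1 : antipode R ∘ₗ Sinv = LinearMap.id)
    (hS2 : Sinv ∘ₗ antipode R = LinearMap.id) (ρ : FinRepr R a) :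
    ∑ i, ρ.right i * Sinv (ρ.left i) = algebraMap R A (counit a) := by
  have hSSinv (x : A) : antipode R (Sinv x) = x := LinearMap.congr_fun hS1 x
  apply eq_algebraMap_of_antipode_eq hS2
  simpa [antipode_mul_antidistrib, hSSinv] using ρ.sum_mul_antipode

theorem sum_antipodeInv_mul (hS1 : antipode R ∘ₗ Sinv = LinearMap.id)
    (hS2 : Sinv ∘ₗ antipode R = LinearMap.id) (ρ : FinRepr R a) :
    ∑ i, Sinv (ρ.right i) * ρ.left i = algebraMap R A (counit a) := by
  have hSSinv (x : A) : antipode R (Sinv x) = x := LinearMap.congr_fun hS1 x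
  apply eq_algebraMap_of_antipode_eq hS2
  simpa [antipode_mul_antidistrib, hSSinv] using ρ.sum_antipode_mul

end Coalgebra.FinRepr

section HopfQBrace

open Coalgebra (FinRepr comul counit)
open HopfAlgebra TensorProduct

variable {k H} {p d : H ⊗[k] H →ₗ[k] H} {Sinv : H →ₗ[k] H}

theorem IsCoalgMorCop.comul_apply_tmul (hp : IsCoalgMorCop k H p) {x y : H}
    (ρx : FinRepr k x) (ρy : FinRepr k y) :
    comul (R := k) (p (x ⊗ₜ[k] y)) =
      ∑ i, ∑ j, p (ρx.left i ⊗ₜ[k] ρy.right j) ⊗ₜ[k] p (ρx.right i ⊗ₜ[k] ρy.left j) := by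
  rw [← LinearMap.comp_apply, hp.1, LinearMap.comp_apply, comulTCop, comulCop]
  simp only [LinearMap.comp_apply, LinearEquiv.coe_coe, map_tmul, ← ρx.eq, ← ρy.eq, map_sum,
    comm_tmul, sum_tmul, tmul_sum, tensorTensorTensorComm_tmul]
  exact Finset.sum_comm

theorem IsCoalgMorCop.counit_apply_tmul (hp : IsCoalgMorCop k H p) (x y : H) :
    counit (R := k) (p (x ⊗ₜ[k] y)) = counit (R := k) x * counit (R := k) y := by
  rw [← LinearMap.comp_apply, hp.2, counitT]
  simp

theorem tmOp_tmul {ι : Type*} [Fintype ι] {x : H} {f g : ι → H}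
    (hfg : ∑ i, f i ⊗ₜ[k] g i = comul (R := k) x) (y : H) :
    tmOp k H p (x ⊗ₜ[k] y) = ∑ i, p (y ⊗ₜ[k] f i) * g i := by
  simp [tmOp, Gmap, ← hfg, tmul_sum, LinearMap.mul'_apply]

theorem TOp_apply {x : H} (ρ : FinRepr k x) :
    TOp k H p Sinv x = ∑ i, p (antipode k (ρ.left i) ⊗ₜ[k] Sinv (ρ.right i)) := by
  simp [TOp, ← ρ.eq]

theorem RightOpModule.dot_algebraMap (hpm : RightOpModule k H p) (x : H) (r : k) :
    p (x ⊗ₜ[k] algebraMap k H r) = r • x := by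
  rw [Algebra.algebraMap_eq_smul_one, tmul_smul, map_smul, hpm.1]

theorem RightOpModule.sum_dot_dot_antipodeInv (hpm : RightOpModule k H p)
    (hS1 : antipode k ∘ₗ Sinv = LinearMap.id) (hS2 : Sinv ∘ₗ antipode k = LinearMap.id)
    (x : H) {e : H} (ρ : FinRepr k e) :
    ∑ i, p (p (x ⊗ₜ[k] ρ.left i) ⊗ₜ[k] Sinv (ρ.right i)) = counit (R := k) e • x := by
  simp_rw [← hpm.2]
  rw [← map_sum, ← tmul_sum, ρ.sum_antipodeInv_mul hS1 hS2, hpm.dot_algebraMap]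

-- `φ = 1·(-)` is a convolution idempotent (distributivity with `h = k = 1`) and, being an
-- anti-coalgebra map, has the right convolution inverse `S⁻¹ ∘ φ`; hence `φ = 1`.
open WithConv in
theorem one_dot (hp : IsCoalgMorCop k H p) (hd : ∀ x : H, d (x ⊗ₜ[k] (1 : H)) = x)
    (hdist : QBraceDistrib k H p d)
    (hS1 : antipode k ∘ₗ Sinv = LinearMap.id) (hS2 : Sinv ∘ₗ antipode k = LinearMap.id)
    (x : H) : p ((1 : H) ⊗ₜ[k] x) = algebraMap k H (counit (R := k) x) := by
  let φ : WithConv (H →ₗ[k] H) := toConv (p ∘ₗ TensorProduct.mk k H H 1)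
  have idem : φ * φ = φ := by
    ext y
    let ρ := FinRepr.arbitrary k y
    rw [ρ.toRepr.convMul_apply]
    simpa [φ, hd, FinRepr.toRepr] using
      ((hdist 1 1 y ρ.n 1 ρ.left ρ.right (fun _ => 1) (fun _ => 1) ρ.eq FinRepr.one.eq).1).symm
  have inv : φ * toConv (Sinv ∘ₗ φ.ofConv) = 1 := by
    ext y
    let ρ := FinRepr.arbitrary k y
    let ρφ : FinRepr k (p (1 ⊗ₜ[k] y)) :=
      ⟨ρ.n, fun i => p (1 ⊗ₜ[k] ρ.right i), fun i => p (1 ⊗ₜ[k] ρ.left i),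
        by simpa using (hp.comul_apply_tmul FinRepr.one ρ).symm⟩
    rw [ρ.toRepr.convMul_apply]
    simpa [φ, FinRepr.toRepr, hp.counit_apply_tmul, ρφ] using ρφ.sum_mul_antipodeInv hS1 hS2
  have hφ : φ = 1 := by
    calc φ = φ * (φ * toConv (Sinv ∘ₗ φ.ofConv)) := by rw [inv, mul_one]
      _ = 1 := by rw [← mul_assoc, idem, inv]
  simpa [φ] using LinearMap.congr_fun (congrArg ofConv hφ) x

theorem RightOpModule.sum_TOp_dot (hpm : RightOpModule k H p)
    (hS1 : antipode k ∘ₗ Sinv = LinearMap.id) (hS2 : Sinv ∘ₗ antipode k = LinearMap.id)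
    {h : H} (ρ : FinRepr k h) :
    ∑ i, p (TOp k H p Sinv (ρ.left i) ⊗ₜ[k] ρ.right i) = antipode k h := by
  let ρl i := FinRepr.arbitrary k (ρ.left i)
  let ρr i := FinRepr.arbitrary k (ρ.right i)
  have hL := ρ.map_sum_assoc (p ∘ₗ map (antipode k)
    (LinearMap.mul' k H ∘ₗ (TensorProduct.comm k H H).toLinearMap ∘ₗ LinearMap.rTensor H Sinv))
    ρl ρr
  simp only [LinearMap.comp_apply, map_tmul, LinearMap.rTensor_tmul, LinearEquiv.coe_coe,
    comm_tmul, LinearMap.mul'_apply] at hL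
  calc ∑ i, p (TOp k H p Sinv (ρ.left i) ⊗ₜ[k] ρ.right i)
      = ∑ i, ∑ j, p (antipode k ((ρl i).left j) ⊗ₜ[k] (ρ.right i * Sinv ((ρl i).right j))) := by
        refine Finset.sum_congr rfl fun i _ => ?_
        simp_rw [TOp_apply (ρl i), sum_tmul, map_sum, ← hpm.2]
    _ = ∑ i, ∑ j, p (antipode k (ρ.left i) ⊗ₜ[k] ((ρr i).right j * Sinv ((ρr i).left j))) := hL
    _ = ∑ i, counit (R := k) (ρ.right i) • antipode k (ρ.left i) := by
        refine Finset.sum_congr rfl fun i _ => ?_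
        rw [← map_sum, ← tmul_sum, FinRepr.sum_mul_antipodeInv hS1 hS2, hpm.dot_algebraMap]
    _ = antipode k h := by
        simp_rw [← map_smul]
        rw [← map_sum, ρ.sum_counit_smul_right]

theorem tmOp_comp_lTensor_TOp (hpm : RightOpModule k H p)
    (hS1 : antipode k ∘ₗ Sinv = LinearMap.id) (hS2 : Sinv ∘ₗ antipode k = LinearMap.id) :
    tmOp k H p ∘ₗ LinearMap.lTensor H (TOp k H p Sinv) ∘ₗ comulCop k H =
      Algebra.linearMap k H ∘ₗ counit (R := k) := by
  ext h
  let ρ := FinRepr.arbitrary k h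
  let ρl i := FinRepr.arbitrary k (ρ.left i)
  let ρr i := FinRepr.arbitrary k (ρ.right i)
  have hL := ρ.map_sum_assoc (LinearMap.mul' k H ∘ₗ map (p ∘ₗ LinearMap.rTensor H (TOp k H p Sinv))
    LinearMap.id ∘ₗ (TensorProduct.assoc k H H H).symm.toLinearMap) ρl ρr
  simp only [LinearMap.comp_apply, map_tmul, LinearMap.rTensor_tmul, LinearEquiv.coe_coe,
    assoc_symm_tmul, LinearMap.id_apply, LinearMap.mul'_apply] at hL
  calc (tmOp k H p ∘ₗ LinearMap.lTensor H (TOp k H p Sinv) ∘ₗ comulCop k H) h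
      = ∑ i, ∑ j, p (TOp k H p Sinv (ρ.left i) ⊗ₜ[k] (ρr i).left j) * (ρr i).right j := by
        simp [comulCop, ← ρ.eq, tmOp_tmul (ρr _).eq]
    _ = ∑ i, ∑ j, p (TOp k H p Sinv ((ρl i).left j) ⊗ₜ[k] (ρl i).right j) * ρ.right i := hL.symm
    _ = ∑ i, antipode k (ρ.left i) * ρ.right i := by
        simp_rw [← Finset.sum_mul, hpm.sum_TOp_dot hS1 hS2]
    _ = _ := ρ.sum_antipode_mul

theorem IsCoalgMorCop.tmOp_dot_tmul (hp : IsCoalgMorCop k H p) {x y : H}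
    (ρx : FinRepr k x) (ρy : FinRepr k y) (w : H) :
    tmOp k H p (p (x ⊗ₜ[k] y) ⊗ₜ[k] w) =
      ∑ i, ∑ j, p (w ⊗ₜ[k] p (ρx.left i ⊗ₜ[k] ρy.right j)) * p (ρx.right i ⊗ₜ[k] ρy.left j) := by
  rw [tmOp_tmul (f := fun q : Fin ρx.n × Fin ρy.n => p (ρx.left q.1 ⊗ₜ[k] ρy.right q.2))
    (g := fun q => p (ρx.right q.1 ⊗ₜ[k] ρy.left q.2))
    (by rw [hp.comul_apply_tmul ρx ρy, Fintype.sum_prod_type])]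
  exact Fintype.sum_prod_type _

theorem dot_mul_eq_sum (hexch : ExchangeId k H p d) (hdist : QBraceDistrib k H p d)
    (x : H) {y h : H} (ρ : FinRepr k y) {n : ℕ} {h1 h2 : Fin n → H}
    (hh : ∑ a, h1 a ⊗ₜ[k] h2 a = comul (R := k) h) :
    p ((x * y) ⊗ₜ[k] h) =
      ∑ a, ∑ j, p (x ⊗ₜ[k] d (h2 a ⊗ₜ[k] ρ.left j)) * p (ρ.right j ⊗ₜ[k] h1 a) := by
  have hW := congrArg (LinearMap.mul' k H ∘ₗ LinearMap.rTensor H (p ∘ₗ TensorProduct.mk k H H x))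
    (hexch y h ρ.n n ρ.left ρ.right h1 h2 ρ.eq hh)
  simp only [map_sum, LinearMap.comp_apply, LinearMap.rTensor_tmul, TensorProduct.mk_apply,
    LinearMap.mul'_apply] at hW
  rw [(hdist x y h n ρ.n h1 h2 ρ.left ρ.right hh ρ.eq).1, Finset.sum_comm, hW, Finset.sum_comm]

theorem sum_dot_dot_bot_mul (hcyc : QCycleConds k H p d) (l z w : H) {y : H} (ρ : FinRepr k y)
    (ρr : ∀ i, FinRepr k (ρ.right i)) (ρz : FinRepr k z) :
    ∑ i, ∑ j, p (p (l ⊗ₜ[k] ρ.left i) ⊗ₜ[k] d (z ⊗ₜ[k] (ρr i).left j)) *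
        p ((ρr i).right j ⊗ₜ[k] w) =
      ∑ i, ∑ b, p (p (l ⊗ₜ[k] ρz.right b) ⊗ₜ[k] p (ρ.left i ⊗ₜ[k] ρz.left b)) *
        p (ρ.right i ⊗ₜ[k] w) := by
  let ρl i := FinRepr.arbitrary k (ρ.left i)
  have hL := ρ.map_sum_assoc (LinearMap.mul' k H ∘ₗ
    map (p ∘ₗ map (p ∘ₗ TensorProduct.mk k H H l) (d ∘ₗ TensorProduct.mk k H H z))
      (p ∘ₗ (TensorProduct.mk k H H).flip w) ∘ₗ
    (TensorProduct.assoc k H H H).symm.toLinearMap) ρl ρr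
  simp only [LinearMap.comp_apply, map_tmul, LinearEquiv.coe_coe, assoc_symm_tmul,
    TensorProduct.mk_apply, LinearMap.flip_apply, LinearMap.mul'_apply] at hL
  rw [← hL]
  refine Finset.sum_congr rfl fun i _ => ?_
  rw [← Finset.sum_mul, ← Finset.sum_mul,
    (hcyc l (ρ.left i) z (ρl i).n ρz.n (ρl i).left (ρl i).right ρz.left ρz.right
      (ρl i).eq ρz.eq).1]

theorem dot_tmOp (hp : IsCoalgMorCop k H p) (hexch : ExchangeId k H p d)
    (hcyc : QCycleConds k H p d) (hdist : QBraceDistrib k H p d)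
    (h kk l : H) {n : ℕ} {h1 h2 : Fin n → H}
    (hh : ∑ a, h1 a ⊗ₜ[k] h2 a = comul (R := k) h) :
    p (tmOp k H p (kk ⊗ₜ[k] l) ⊗ₜ[k] h) =
      ∑ a, tmOp k H p (p (kk ⊗ₜ[k] h1 a) ⊗ₜ[k] p (l ⊗ₜ[k] h2 a)) := by
  let ρ := FinRepr.arbitrary k kk
  let ρr i := FinRepr.arbitrary k (ρ.right i)
  let ρh : FinRepr k h := ⟨n, h1, h2, hh⟩
  let ρ1 a := FinRepr.arbitrary k (h1 a)
  let ρ2 a := FinRepr.arbitrary k (h2 a)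
  have hL (i) := ρh.map_sum_assoc (LinearMap.mul' k H ∘ₗ
    (TensorProduct.comm k H H).toLinearMap ∘ₗ
    map (p ∘ₗ TensorProduct.mk k H H (ρ.right i))
      (p ∘ₗ map (p ∘ₗ TensorProduct.mk k H H l) (p ∘ₗ TensorProduct.mk k H H (ρ.left i)) ∘ₗ
        (TensorProduct.comm k H H).toLinearMap)) ρ1 ρ2
  simp only [LinearMap.comp_apply, map_tmul, LinearEquiv.coe_coe, comm_tmul,
    TensorProduct.mk_apply, LinearMap.mul'_apply] at hL
  calc p (tmOp k H p (kk ⊗ₜ[k] l) ⊗ₜ[k] h)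
      = ∑ a, ∑ i, ∑ j, p (p (l ⊗ₜ[k] ρ.left i) ⊗ₜ[k] d (h2 a ⊗ₜ[k] (ρr i).left j)) *
          p ((ρr i).right j ⊗ₜ[k] h1 a) := by
        rw [tmOp_tmul ρ.eq, sum_tmul, map_sum, Finset.sum_comm]
        simp_rw [dot_mul_eq_sum hexch hdist _ (ρr _) hh]
    _ = ∑ i, ∑ a, ∑ b, p (p (l ⊗ₜ[k] (ρ2 a).right b) ⊗ₜ[k] p (ρ.left i ⊗ₜ[k] (ρ2 a).left b)) *
          p (ρ.right i ⊗ₜ[k] h1 a) := by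
        simp_rw [sum_dot_dot_bot_mul hcyc l _ _ ρ ρr (ρ2 _)]
        exact Finset.sum_comm
    _ = ∑ i, ∑ a, ∑ c, p (p (l ⊗ₜ[k] h2 a) ⊗ₜ[k] p (ρ.left i ⊗ₜ[k] (ρ1 a).right c)) *
          p (ρ.right i ⊗ₜ[k] (ρ1 a).left c) := Finset.sum_congr rfl fun i _ => (hL i).symm
    _ = ∑ a, tmOp k H p (p (kk ⊗ₜ[k] h1 a) ⊗ₜ[k] p (l ⊗ₜ[k] h2 a)) := by
        simp_rw [hp.tmOp_dot_tmul ρ (ρ1 _)]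
        exact Finset.sum_comm

theorem RightOpModule.sum_tmOp_antipode_dot (hpm : RightOpModule k H p) {b : H}
    (ρ : FinRepr k b) (y : H) :
    ∑ j, tmOp k H p (antipode k (ρ.left j) ⊗ₜ[k] p (y ⊗ₜ[k] ρ.right j)) = y * antipode k b := by
  let ρl i := FinRepr.arbitrary k (ρ.left i)
  let ρr i := FinRepr.arbitrary k (ρ.right i)
  have hL := ρ.map_sum_assoc (LinearMap.mul' k H ∘ₗ (TensorProduct.comm k H H).toLinearMap ∘ₗ
    map (antipode k) (p ∘ₗ TensorProduct.mk k H H y ∘ₗ LinearMap.mul' k H ∘ₗ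
      LinearMap.rTensor H (antipode k))) ρl ρr
  simp only [LinearMap.comp_apply, map_tmul, LinearEquiv.coe_coe, comm_tmul,
    LinearMap.rTensor_tmul, TensorProduct.mk_apply, LinearMap.mul'_apply] at hL
  calc ∑ j, tmOp k H p (antipode k (ρ.left j) ⊗ₜ[k] p (y ⊗ₜ[k] ρ.right j))
      = ∑ j, ∑ m, p (y ⊗ₜ[k] (antipode k ((ρl j).right m) * ρ.right j)) *
          antipode k ((ρl j).left m) := by
        simp_rw [tmOp_tmul (ρl _).ofAntipode.eq, FinRepr.ofAntipode, ← hpm.2]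
        rfl
    _ = ∑ j, ∑ m, p (y ⊗ₜ[k] (antipode k ((ρr j).left m) * (ρr j).right m)) *
          antipode k (ρ.left j) := hL
    _ = ∑ j, counit (R := k) (ρ.right j) • (y * antipode k (ρ.left j)) := by
        refine Finset.sum_congr rfl fun j _ => ?_
        rw [← Finset.sum_mul, ← map_sum, ← tmul_sum, FinRepr.sum_antipode_mul,
          hpm.dot_algebraMap, smul_mul_assoc]
    _ = y * antipode k b := by
        simp_rw [← mul_smul_comm, ← Finset.mul_sum, ← map_smul]
        rw [← map_sum, ρ.sum_counit_smul_right]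

theorem sum_dot_tmOp_TOp (hp : IsCoalgMorCop k H p) (hpm : RightOpModule k H p)
    (hexch : ExchangeId k H p d) (hcyc : QCycleConds k H p d) (hdist : QBraceDistrib k H p d)
    (hS1 : antipode k ∘ₗ Sinv = LinearMap.id) (hS2 : Sinv ∘ₗ antipode k = LinearMap.id)
    {b : H} (ρ : FinRepr k b) (y : H) :
    ∑ j, p (tmOp k H p (TOp k H p Sinv (ρ.left j) ⊗ₜ[k] y) ⊗ₜ[k] ρ.right j) =
      y * antipode k b := by
  let ρl i := FinRepr.arbitrary k (ρ.left i)
  let ρr i := FinRepr.arbitrary k (ρ.right i)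
  have hL := ρ.map_sum_assoc (tmOp k H p ∘ₗ map (p ∘ₗ LinearMap.rTensor H (TOp k H p Sinv))
    (p ∘ₗ TensorProduct.mk k H H y) ∘ₗ (TensorProduct.assoc k H H H).symm.toLinearMap) ρl ρr
  simp only [LinearMap.comp_apply, map_tmul, LinearEquiv.coe_coe, assoc_symm_tmul,
    LinearMap.rTensor_tmul, TensorProduct.mk_apply] at hL
  calc ∑ j, p (tmOp k H p (TOp k H p Sinv (ρ.left j) ⊗ₜ[k] y) ⊗ₜ[k] ρ.right j)
      = ∑ j, ∑ m, tmOp k H p (p (TOp k H p Sinv (ρ.left j) ⊗ₜ[k] (ρr j).left m) ⊗ₜ[k]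
          p (y ⊗ₜ[k] (ρr j).right m)) :=
        Finset.sum_congr rfl fun j _ => dot_tmOp hp hexch hcyc hdist _ _ _ (ρr j).eq
    _ = ∑ j, ∑ m, tmOp k H p (p (TOp k H p Sinv ((ρl j).left m) ⊗ₜ[k] (ρl j).right m) ⊗ₜ[k]
          p (y ⊗ₜ[k] ρ.right j)) := hL.symm
    _ = ∑ j, tmOp k H p (antipode k (ρ.left j) ⊗ₜ[k] p (y ⊗ₜ[k] ρ.right j)) := by
        refine Finset.sum_congr rfl fun j _ => ?_
        rw [← map_sum, ← sum_tmul, hpm.sum_TOp_dot hS1 hS2]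
    _ = y * antipode k b := hpm.sum_tmOp_antipode_dot ρ y

theorem tmOp_TOp_tmul (hp : IsCoalgMorCop k H p) (hpm : RightOpModule k H p)
    (hexch : ExchangeId k H p d) (hcyc : QCycleConds k H p d) (hdist : QBraceDistrib k H p d)
    (hS1 : antipode k ∘ₗ Sinv = LinearMap.id) (hS2 : Sinv ∘ₗ antipode k = LinearMap.id)
    {b : H} (ρ : FinRepr k b) (y : H) :
    tmOp k H p (TOp k H p Sinv b ⊗ₜ[k] y) =
      ∑ j, p ((y * antipode k (ρ.left j)) ⊗ₜ[k] Sinv (ρ.right j)) := by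
  let ρl i := FinRepr.arbitrary k (ρ.left i)
  let ρr i := FinRepr.arbitrary k (ρ.right i)
  have hL := ρ.map_sum_assoc (p ∘ₗ map (p ∘ₗ LinearMap.rTensor H
    (tmOp k H p ∘ₗ (TensorProduct.mk k H H).flip y ∘ₗ TOp k H p Sinv)) Sinv ∘ₗ
      (TensorProduct.assoc k H H H).symm.toLinearMap) ρl ρr
  simp only [LinearMap.comp_apply, map_tmul, LinearEquiv.coe_coe, assoc_symm_tmul,
    LinearMap.rTensor_tmul, LinearMap.flip_apply, TensorProduct.mk_apply] at hL
  calc tmOp k H p (TOp k H p Sinv b ⊗ₜ[k] y)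
      = ∑ j, counit (R := k) (ρ.right j) • tmOp k H p (TOp k H p Sinv (ρ.left j) ⊗ₜ[k] y) := by
        conv_lhs => rw [← ρ.sum_counit_smul_right]
        simp only [map_sum, map_smul, sum_tmul, ← smul_tmul']
    _ = ∑ j, ∑ m, p (p (tmOp k H p (TOp k H p Sinv (ρ.left j) ⊗ₜ[k] y) ⊗ₜ[k] (ρr j).left m) ⊗ₜ[k]
          Sinv ((ρr j).right m)) := by
        simp_rw [hpm.sum_dot_dot_antipodeInv hS1 hS2 _ (ρr _)]
    _ = ∑ j, ∑ m, p (p (tmOp k H p (TOp k H p Sinv ((ρl j).left m) ⊗ₜ[k] y) ⊗ₜ[k]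
          (ρl j).right m) ⊗ₜ[k] Sinv (ρ.right j)) := hL.symm
    _ = ∑ j, p ((y * antipode k (ρ.left j)) ⊗ₜ[k] Sinv (ρ.right j)) := by
        refine Finset.sum_congr rfl fun j _ => ?_
        rw [← map_sum, ← sum_tmul, sum_dot_tmOp_TOp hp hpm hexch hcyc hdist hS1 hS2]

theorem tmOp_comp_rTensor_TOp (hp : IsCoalgMorCop k H p) (hpm : RightOpModule k H p)
    (hd : ∀ x : H, d (x ⊗ₜ[k] (1 : H)) = x)
    (hexch : ExchangeId k H p d) (hcyc : QCycleConds k H p d) (hdist : QBraceDistrib k H p d)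
    (hS1 : antipode k ∘ₗ Sinv = LinearMap.id) (hS2 : Sinv ∘ₗ antipode k = LinearMap.id) :
    tmOp k H p ∘ₗ LinearMap.rTensor H (TOp k H p Sinv) ∘ₗ comulCop k H =
      Algebra.linearMap k H ∘ₗ counit (R := k) := by
  ext h
  let ρ := FinRepr.arbitrary k h
  let ρl i := FinRepr.arbitrary k (ρ.left i)
  let ρr i := FinRepr.arbitrary k (ρ.right i)
  have hL := ρ.map_sum_assoc (p ∘ₗ map (LinearMap.mul' k H ∘ₗ LinearMap.lTensor H (antipode k))
    Sinv ∘ₗ (TensorProduct.assoc k H H H).symm.toLinearMap) ρl ρr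
  simp only [LinearMap.comp_apply, map_tmul, LinearEquiv.coe_coe, assoc_symm_tmul,
    LinearMap.lTensor_tmul, LinearMap.mul'_apply] at hL
  calc (tmOp k H p ∘ₗ LinearMap.rTensor H (TOp k H p Sinv) ∘ₗ comulCop k H) h
      = ∑ i, ∑ j, p ((ρ.left i * antipode k ((ρr i).left j)) ⊗ₜ[k] Sinv ((ρr i).right j)) := by
        simp [comulCop, ← ρ.eq,
          tmOp_TOp_tmul hp hpm hexch hcyc hdist hS1 hS2 (ρr _)]
    _ = ∑ i, ∑ j, p (((ρl i).left j * antipode k ((ρl i).right j)) ⊗ₜ[k] Sinv (ρ.right i)) :=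
        hL.symm
    _ = ∑ i, p (algebraMap k H (counit (R := k) (ρ.left i)) ⊗ₜ[k] Sinv (ρ.right i)) := by
        refine Finset.sum_congr rfl fun i _ => ?_
        rw [← map_sum, ← sum_tmul, FinRepr.sum_mul_antipode]
    _ = p (1 ⊗ₜ[k] Sinv h) := by
        conv_rhs => rw [← ρ.sum_counit_smul_left]
        simp only [map_sum, map_smul, tmul_sum, tmul_smul, Algebra.algebraMap_eq_smul_one,
          ← smul_tmul']
    _ = algebraMap k H (counit (R := k) h) := by
        rw [one_dot hp hd hdist hS1 hS2, counit_antipodeInv hS1]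

end HopfQBrace

/-- `T_×` is the convolution inverse of the identity with respect to
`(Δ^cop, ×)`, and `(k×l)·h = (k·h₍₁₎) × (l·h₍₂₎)`. -/
theorem stmt_14 (p d : H ⊗[k] H →ₗ[k] H) (hpd : IsHopfQBrace k H p d)
    (Sinv : H →ₗ[k] H)
    (hS1 : HopfAlgebra.antipode (R := k) (A := H) ∘ₗ Sinv = LinearMap.id)
    (hS2 : Sinv ∘ₗ HopfAlgebra.antipode (R := k) (A := H) = LinearMap.id) :
    (tmOp k H p ∘ₗ LinearMap.lTensor H (TOp k H p Sinv) ∘ₗ comulCop k H =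
      Algebra.linearMap k H ∘ₗ Coalgebra.counit (R := k)) ∧
    (tmOp k H p ∘ₗ LinearMap.rTensor H (TOp k H p Sinv) ∘ₗ comulCop k H =
      Algebra.linearMap k H ∘ₗ Coalgebra.counit (R := k)) ∧
    (∀ (h kk l : H) (n : ℕ) (h1 h2 : Fin n → H),
      (∑ i, h1 i ⊗ₜ[k] h2 i) = Coalgebra.comul (R := k) h →
      p (tmOp k H p (kk ⊗ₜ[k] l) ⊗ₜ[k] h) =
        ∑ i, tmOp k H p (p (kk ⊗ₜ[k] h1 i) ⊗ₜ[k] p (l ⊗ₜ[k] h2 i))) := by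
  obtain ⟨hp, -, hexch, -, -, hcyc, hpm, hdm, hdist⟩ := hpd
  exact ⟨tmOp_comp_lTensor_TOp hpm hS1 hS2,
    tmOp_comp_rTensor_TOp hp hpm hdm.1 hexch hcyc hdist hS1 hS2,
    fun h kk l _ _ _ hh => dot_tmOp hp hexch hcyc hdist h kk l hh⟩

end
end
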